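/- arXiv:2010.07119 — 4 statements merged into one kernel-verified Lean document; each statement's English description precedes it below -/
import Mathlib

section
/- Let t_1 = 22 and t_{i+1} = t_i(t_i−1)+1 for i ≥ 1, let C = Σ_{i=1}^∞ 1/(t_i−1), and let R = 5/3 + C/2. Let β_1 = 58/529, β_2 = 3 − (4−2β_1)/((3−R)(2−β_1)−1), β_3 = 148/287, β_4 = 15/23, β_5 = 13/23. Let M ≥ 10000 be an integer and define v : (0,1] → ℝ by v(1) = 0; v(x) = 1/(i+1−β_i) for x ∈ [1/(i+1), 1/i) and 1 ≤ i ≤ 5; v(x) = 1/i for x ∈ [1/(i+1), 1/i) and 6 ≤ i ≤ M−1; and v(x) = M·x/(M−1) for x ∈ (0, 1/M). Then for every finite multiset T of reals in (0,1] with Σ_{t∈T} t < 1 and every a ∈ (0,1], it holds that v(a) + Σ_{t∈T} v(t) ≤ R + 1/(M(M−1)). -/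
open scoped BigOperators

noncomputable section

/-- The sequence `t₁ = 22`, `t_{i+1} = t_i(t_i − 1) + 1` (0-indexed: `t 0 = 22`). -/
def t : ℕ → ℕ
  | 0 => 22
  | n + 1 => t n * (t n - 1) + 1

/-- `C = Σ_{i=1}^∞ 1/(t_i − 1)`. -/
def C : ℝ := ∑' i : ℕ, 1 / ((t i : ℝ) - 1)

/-- `R = 5/3 + C/2 ≈ 1.691561`. -/
def R : ℝ := 5 / 3 + C / 2

def β : ℕ → ℝ := fun i =>
  if i = 1 then 58 / 529
  else if i = 2 then 3 - (4 - 2 * (58 / 529 : ℝ)) / ((3 - R) * (2 - 58 / 529) - 1)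
  else if i = 3 then 148 / 287
  else if i = 4 then 15 / 23
  else 13 / 23

/-- The weight function `v` for the second part of the input: `v(1) = 0`,
`v(x) = 1/(i+1−β_i)` for `x ∈ [1/(i+1), 1/i)` with `1 ≤ i ≤ 5`,
`v(x) = 1/i` for `x ∈ [1/(i+1), 1/i)` with `6 ≤ i ≤ M−1` (here `i = ⌈1/x⌉−1`),
and `v(x) = M·x/(M−1)` for `x ∈ (0, 1/M)`. -/
def v (M : ℕ) (x : ℝ) : ℝ :=
  if x = 1 then 0
  else if 1 / 2 ≤ x then 1 / (2 - β 1)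
  else if 1 / 3 ≤ x then 1 / (3 - β 2)
  else if 1 / 4 ≤ x then 1 / (4 - β 3)
  else if 1 / 5 ≤ x then 1 / (5 - β 4)
  else if 1 / 6 ≤ x then 1 / (6 - β 5)
  else if 1 / (M : ℝ) ≤ x then 1 / ((⌈1 / x⌉₊ - 1 : ℕ) : ℝ)
  else (M : ℝ) * x / ((M : ℝ) - 1)

namespace OOE

def ff (i : ℕ) : ℝ := 1 / ((t i : ℝ) - 1)

lemma t_ge (k : ℕ) : 22 ≤ t k := by
  induction k with
  | zero => simp [t]
  | succ n ih =>
      show 22 ≤ t n * (t n - 1) + 1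
      have h1 : 21 ≤ t n - 1 := by omega
      have := Nat.mul_le_mul ih h1
      omega

lemma t_lt_succ (k : ℕ) : t k < t (k+1) := by
  have h := t_ge k
  show t k < t k * (t k - 1) + 1
  have h1 : 2 ≤ t k - 1 := by omega
  have := Nat.mul_le_mul (le_refl (t k)) h1
  omega

lemma t_succ_real (k : ℕ) : ((t (k+1) : ℝ) - 1) = (t k : ℝ) * ((t k : ℝ) - 1) := by
  have h := t_ge k
  have heq : t (k+1) = t k * (t k - 1) + 1 := rfl
  rw [heq]
  push_cast [Nat.cast_sub (by omega : 1 ≤ t k)]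
  ring

lemma t_real_ge (k : ℕ) : (21 : ℝ) ≤ (t k : ℝ) - 1 := by
  have h := t_ge k
  have : (22 : ℝ) ≤ (t k : ℝ) := by exact_mod_cast h
  linarith

lemma ff_pos (k : ℕ) : 0 < ff k := by
  have := t_real_ge k
  unfold ff
  positivity

lemma ff_nonneg (k : ℕ) : 0 ≤ ff k := (ff_pos k).le

lemma ff_halve (k : ℕ) : ff (k+1) ≤ ff k / 2 := by
  unfold ff
  rw [t_succ_real k]
  have h := t_real_ge k
  have h2 : (22:ℝ) ≤ (t k : ℝ) := by
    have := t_ge k; exact_mod_cast this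
  have e : 1 / ((t k:ℝ) - 1) / 2 = 1 / (2 * ((t k:ℝ) - 1)) := by
    rw [div_div, mul_comm]
  rw [e]
  apply one_div_le_one_div_of_le (by linarith)
  nlinarith

lemma ff_zero : ff 0 = 1/21 := by
  unfold ff
  norm_num [t]

lemma ff_one : ff 1 = 1/462 := by
  have h : t 1 = 463 := by
    show t 0 * (t 0 - 1) + 1 = 463
    simp [t]
  unfold ff
  rw [h]
  norm_num

lemma ff_le_geom (k : ℕ) : ff k ≤ (1/21) * (1/2)^k := by
  induction k with
  | zero => simp [ff_zero]
  | succ n ih =>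
      have := ff_halve n
      have : ff (n+1) ≤ ((1/21) * (1/2)^n) / 2 := by linarith
      calc ff (n+1) ≤ ((1/21) * (1/2)^n) / 2 := this
        _ = (1/21) * (1/2)^(n+1) := by ring

lemma ff_summable : Summable ff :=
  Summable.of_nonneg_of_le ff_nonneg ff_le_geom (summable_geometric_two.mul_left (1/21))

lemma ff_shift_summable (k : ℕ) : Summable (fun j => ff (j + k)) :=
  (summable_nat_add_iff k).mpr ff_summable

/-- tail k = sum over j of ff (j + (k+1)) -/
def tail (k : ℕ) : ℝ := ∑' j : ℕ, ff (j + (k+1))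

lemma tail_nonneg (k : ℕ) : 0 ≤ tail k :=
  tsum_nonneg (fun j => ff_nonneg _)

lemma tail_rec (k : ℕ) : tail k = ff (k+1) + tail (k+1) := by
  unfold tail
  rw [Summable.tsum_eq_zero_add (ff_shift_summable (k+1))]
  have h1 : ff (0 + (k+1)) = ff (k+1) := by norm_num
  have h2 : (∑' j:ℕ, ff ((j+1) + (k+1))) = ∑' j:ℕ, ff (j + (k+1+1)) := by
    apply tsum_congr
    intro j
    congr 1
    omega
  rw [h1, h2]

lemma C_eq : C = ff 0 + tail 0 := by
  have h : C = ∑' i, ff i := rfl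
  rw [h, Summable.tsum_eq_zero_add ff_summable]
  have h2 : (∑' j:ℕ, ff (j+1)) = tail 0 := by
    unfold tail
    apply tsum_congr
    intro j
    congr 1
  rw [h2]

lemma ff_le_tail (k : ℕ) : ff (k+1) ≤ tail k := by
  rw [tail_rec]
  have := tail_nonneg (k+1)
  linarith

lemma tail_one_le : tail 1 ≤ 1/100000 := by
  have h : ∀ j : ℕ, ff (j + 2) ≤ (1/213906) * (1/2)^j := by
    intro j
    induction j with
    | zero =>
        have h1 : t 2 = 213907 := by
          have h0 : t 1 = 463 := by show t 0 * (t 0 - 1) + 1 = 463; simp [t]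
          show t 1 * (t 1 - 1) + 1 = 213907
          rw [h0]
        simp only [Nat.zero_add]
        unfold ff
        rw [h1]
        norm_num
    | succ n ih =>
        have hh := ff_halve (n + 2)
        have : ff (n + 1 + 2) ≤ ((1/213906) * (1/2)^n)/2 := by
          have : ff (n + 1 + 2) = ff ((n + 2) + 1) := rfl
          rw [this]
          linarith
        calc ff (n+1+2) ≤ ((1/213906) * (1/2)^n)/2 := this
          _ = (1/213906) * (1/2)^(n+1) := by ring
  have hsum : tail 1 ≤ ∑' j : ℕ, (1/213906 : ℝ) * (1/2)^j := by
    apply Summable.tsum_le_tsum h (ff_shift_summable 2)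
    exact summable_geometric_two.mul_left _
  rw [tsum_mul_left, tsum_geometric_two] at hsum
  linarith

lemma C_ge : 23/462 ≤ C := by
  rw [C_eq, tail_rec]
  have h0 := ff_zero
  have h1 := ff_one
  have h2 := tail_nonneg 1
  rw [h0, h1]
  norm_num
  linarith

lemma C_le : C ≤ 2/21 := by
  have h : C = ∑' i, ff i := rfl
  have hle : C ≤ ∑' i : ℕ, (1/21 : ℝ) * (1/2)^i := by
    rw [h]
    apply Summable.tsum_le_tsum ff_le_geom ff_summable
    exact summable_geometric_two.mul_left _
  rw [tsum_mul_left, tsum_geometric_two] at hle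
  linarith

lemma C_nonneg : 0 ≤ C := le_trans (by norm_num) C_ge

/-! ### pointwise facts about `v` -/

section PW

variable {M : ℕ} (hM : 10000 ≤ M)

lemma MR (hM : 10000 ≤ M) : (10000 : ℝ) ≤ (M : ℝ) := by exact_mod_cast hM

/-- value of `β 2` -/
lemma beta2_val : (3 : ℝ) - β 2 = 2000 / (2413/3 - 500 * C) := by
  have hβ : β 2 = 3 - (4 - 2 * (58 / 529 : ℝ)) / ((3 - R) * (2 - 58 / 529) - 1) := by
    simp [β]
  have hD : (3 - R) * (2 - (58:ℝ) / 529) - 1 = (2413/3 - 500 * C)/529 := by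
    have hR : R = 5/3 + C/2 := rfl
    rw [hR]; ring
  have hDpos : (0:ℝ) < 2413/3 - 500 * C := by
    have := C_le; linarith
  rw [hβ, hD, div_div_eq_mul_div]
  have h2000 : (4 - 2*(58/529:ℝ))*529 = 2000 := by norm_num
  rw [h2000]
  ring

lemma v2_val : 1 / ((3:ℝ) - β 2) = 2413/6000 - C/4 := by
  rw [beta2_val, one_div_div]
  ring

lemma v2_pos_facts : (0:ℝ) < 2413/6000 - C/4 := by
  have := C_le; linarith

/-- v on [1/2, 1) -/
lemma v_half {x : ℝ} (h1 : 1/2 ≤ x) (h2 : x < 1) : v M x = 529/1000 := by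
  have hx1 : x ≠ 1 := by linarith
  have hβ : β 1 = 58/529 := by simp [β]
  unfold v
  rw [if_neg hx1, if_pos h1, hβ]
  norm_num

/-- v on [1/3, 1/2) -/
lemma v_third {x : ℝ} (h1 : 1/3 ≤ x) (h2 : x < 1/2) : v M x = 2413/6000 - C/4 := by
  have hx1 : x ≠ 1 := by intro h; rw [h] at h2; linarith
  unfold v
  rw [if_neg hx1, if_neg (by linarith), if_pos h1]
  exact v2_val

/-- v on [1/4, 1/3) -/
lemma v_quarter {x : ℝ} (h1 : 1/4 ≤ x) (h2 : x < 1/3) : v M x = 287/1000 := by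
  have hx1 : x ≠ 1 := by intro h; rw [h] at h2; linarith
  have hβ : β 3 = 148/287 := by simp [β]
  unfold v
  rw [if_neg hx1, if_neg (by linarith), if_neg (by linarith), if_pos h1, hβ]
  norm_num

lemma v_fifth {x : ℝ} (h1 : 1/5 ≤ x) (h2 : x < 1/4) : v M x = 23/100 := by
  have hx1 : x ≠ 1 := by intro h; rw [h] at h2; linarith
  have hβ : β 4 = 15/23 := by simp [β]
  unfold v
  rw [if_neg hx1, if_neg (by linarith), if_neg (by linarith), if_neg (by linarith),
    if_pos h1, hβ]
  norm_num

lemma v_sixth {x : ℝ} (h1 : 1/6 ≤ x) (h2 : x < 1/5) : v M x = 23/125 := by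
  have hx1 : x ≠ 1 := by intro h; rw [h] at h2; linarith
  have hβ : β 5 = 13/23 := by simp [β]
  unfold v
  rw [if_neg hx1, if_neg (by linarith), if_neg (by linarith), if_neg (by linarith),
    if_neg (by linarith), if_pos h1, hβ]
  norm_num

lemma v_small {x : ℝ} (h2 : x < 1/6) (hx1 : x ≠ 1) :
    v M x = if 1 / (M : ℝ) ≤ x then 1 / ((⌈1 / x⌉₊ - 1 : ℕ) : ℝ)
      else (M : ℝ) * x / ((M : ℝ) - 1) := by
  unfold v
  rw [if_neg hx1, if_neg (by linarith), if_neg (by linarith), if_neg (by linarith),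
    if_neg (by linarith), if_neg (by linarith)]

/-- v on class i, for 6 ≤ i, i+1 ≤ M -/
lemma v_class {x : ℝ} {i : ℕ} (hM : 10000 ≤ M) (hi : 6 ≤ i)
    (h1 : 1/((i:ℝ)+1) ≤ x) (h2 : x < 1/(i:ℝ)) (hiM : ((i:ℝ)+1) ≤ (M:ℝ)) :
    v M x = 1/(i:ℝ) := by
  have hipos : (0:ℝ) < (i:ℝ) := by
    have : (6:ℝ) ≤ (i:ℝ) := by exact_mod_cast hi
    linarith
  have hxpos : 0 < x := lt_of_lt_of_le (by positivity) h1
  have hxs : x < 1/6 := by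
    have : (6:ℝ) ≤ (i:ℝ) := by exact_mod_cast hi
    have : 1/(i:ℝ) ≤ 1/6 := by
      apply one_div_le_one_div_of_le <;> linarith
    linarith
  have hMx : 1/(M:ℝ) ≤ x := by
    have hMpos : (0:ℝ) < (M:ℝ) := by have := MR hM; linarith
    have : 1/(M:ℝ) ≤ 1/((i:ℝ)+1) := by
      apply one_div_le_one_div_of_le (by linarith) hiM
    linarith
  rw [v_small hxs (by intro h; rw [h] at hxs; linarith), if_pos hMx]
  have hceil : ⌈1/x⌉₊ = i + 1 := by
    apply (Nat.ceil_eq_iff (by omega)).2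
    constructor
    · have : ((i+1-1 : ℕ):ℝ) = (i:ℝ) := by
        push_cast [Nat.cast_sub (by omega : 1 ≤ i + 1)]; ring
      rw [this]
      rw [lt_div_iff₀ hxpos]
      calc (i:ℝ) * x < (i:ℝ) * (1/(i:ℝ)) := by
            apply mul_lt_mul_of_pos_left h2 hipos
        _ = 1 := by field_simp
    · rw [div_le_iff₀ hxpos]
      push_cast
      calc (1:ℝ) = ((i:ℝ)+1) * (1/((i:ℝ)+1)) := by field_simp
        _ ≤ ((i:ℝ)+1) * x := by
            apply mul_le_mul_of_nonneg_left h1 (by linarith)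
  rw [hceil]
  simp

/-- tiny branch -/
lemma bon_tiny {x : ℝ} (hM : 10000 ≤ M) (h0 : 0 < x) (h1 : x < 1/(M:ℝ)) :
    v M x - x = x / ((M:ℝ) - 1) := by
  have hMR := MR hM
  have hxs : x < 1/6 := by
    have : 1/(M:ℝ) ≤ 1/6 := by
      apply one_div_le_one_div_of_le <;> linarith
    linarith
  rw [v_small hxs (by intro h; rw [h] at hxs; linarith), if_neg (by linarith)]
  have hM1 : ((M:ℝ) - 1) ≠ 0 := by linarith
  field_simp
  ring

/-- rate bound: for x < 1/n with 6 ≤ n ≤ M-1 : bonus ≤ x/n -/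
lemma bon_rate {x : ℝ} {n : ℕ} (hM : 10000 ≤ M) (hn : 6 ≤ n)
    (hnM : ((n:ℝ)) ≤ (M:ℝ) - 1) (h0 : 0 < x) (h2 : x < 1/(n:ℝ)) :
    v M x - x ≤ x / (n:ℝ) := by
  have hMR := MR hM
  have hn6 : (6:ℝ) ≤ (n:ℝ) := by exact_mod_cast hn
  have hxs : x < 1/6 := by
    have : 1/(n:ℝ) ≤ 1/6 := by apply one_div_le_one_div_of_le <;> linarith
    linarith
  rw [v_small hxs (by intro h; rw [h] at hxs; linarith)]
  by_cases hMx : 1/(M:ℝ) ≤ x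
  · rw [if_pos hMx]
    set c := ⌈1/x⌉₊ with hc
    have hclt : n < c := by
      rw [hc]
      rw [Nat.lt_ceil]
      rw [lt_div_iff₀ h0]
      calc (n:ℝ) * x < (n:ℝ) * (1/(n:ℝ)) := by
            apply mul_lt_mul_of_pos_left h2 (by linarith)
        _ = 1 := by field_simp
    have hcge : (n:ℝ) + 1 ≤ (c:ℝ) := by exact_mod_cast hclt
    have hxc : 1/(c:ℝ) ≤ x := by
      have hle : 1/x ≤ (c:ℝ) := Nat.le_ceil _
      rw [div_le_iff₀ (by linarith : (0:ℝ) < (c:ℝ))]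
      calc (1:ℝ) = x * (1/x) := by field_simp
        _ ≤ x * (c:ℝ) := by apply mul_le_mul_of_nonneg_left hle h0.le
    have hcast : ((c - 1 : ℕ) : ℝ) = (c:ℝ) - 1 := by
      push_cast [Nat.cast_sub (by omega : 1 ≤ c)]; ring
    rw [hcast]
    have hc1pos : (0:ℝ) < (c:ℝ) - 1 := by linarith
    -- 1/(c-1) ≤ x + x/n  ⟺  (n+1)(c-1) ≥ cn given x ≥ 1/c
    have key : 1/((c:ℝ)-1) ≤ x + x/(n:ℝ) := by
      have h1 : 1/((c:ℝ)-1) ≤ (1/(c:ℝ)) * ((c:ℝ)/((c:ℝ)-1)) := by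
        rw [div_mul_div_comm, one_mul]
        rw [div_le_div_iff₀ hc1pos (by positivity)]
        nlinarith
      have h2' : (1/(c:ℝ)) * ((c:ℝ)/((c:ℝ)-1)) ≤ x * (((n:ℝ)+1)/(n:ℝ)) := by
        apply mul_le_mul hxc _ (by positivity) h0.le
        rw [div_le_div_iff₀ hc1pos (by linarith)]
        nlinarith
      calc 1/((c:ℝ)-1) ≤ (1/(c:ℝ)) * ((c:ℝ)/((c:ℝ)-1)) := h1
        _ ≤ x * (((n:ℝ)+1)/(n:ℝ)) := h2'
        _ = x + x/(n:ℝ) := by field_simp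
    linarith
  · rw [if_neg hMx]
    have hM1 : ((M:ℝ) - 1) ≠ 0 := by linarith
    have : (M:ℝ) * x / ((M:ℝ) - 1) - x = x / ((M:ℝ)-1) := by
      field_simp
      ring
    rw [this]
    apply div_le_div_of_nonneg_left h0.le _ hnM
    · linarith

/-- class-6 cap -/
lemma bon_six {x : ℝ} (hM : 10000 ≤ M) (h1 : 1/7 ≤ x) (h2 : x < 1/6) :
    v M x - x ≤ 1/42 := by
  have hMR := MR hM
  have ha : 1/(((6:ℕ):ℝ)+1) ≤ x := by norm_num; linarith
  have hb : x < 1/((6:ℕ):ℝ) := by norm_num; linarith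
  have hc : ((6:ℕ):ℝ)+1 ≤ (M:ℝ) := by norm_num; linarith
  have hv := v_class (M := M) (x := x) (i := 6) hM (by norm_num) ha hb hc
  rw [hv]
  norm_num
  linarith

/-- class-7 cap -/
lemma bon_seven {x : ℝ} (hM : 10000 ≤ M) (h1 : 1/8 ≤ x) (h2 : x < 1/7) :
    v M x - x ≤ 1/56 := by
  have hMR := MR hM
  have ha : 1/(((7:ℕ):ℝ)+1) ≤ x := by norm_num; linarith
  have hb : x < 1/((7:ℕ):ℝ) := by norm_num; linarith
  have hc : ((7:ℕ):ℝ)+1 ≤ (M:ℝ) := by norm_num; linarith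
  have hv := v_class (M := M) (x := x) (i := 7) hM (by norm_num) ha hb hc
  rw [hv]
  norm_num
  linarith

/-- LP per-item bound away from class 6 -/
lemma bon_LP_item {x : ℝ} (hM : 10000 ≤ M) (h0 : 0 < x) (h3 : x < 1/3)
    (hns : ¬ (1/7 ≤ x ∧ x < 1/6)) : v M x - x ≤ (3/20) * x := by
  by_cases hc : x < 1/7
  · have h7 : x < 1/((7:ℕ):ℝ) := by norm_num; linarith
    have hr := bon_rate (M := M) (x := x) (n := 7) hM (by norm_num)
      (by have := MR hM; push_cast; linarith) h0 h7
    have h7' : x / ((7:ℕ):ℝ) ≤ (3/20) * x := by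
      norm_num
      linarith
    linarith
  · push_neg at hc
    have h6 : 1/6 ≤ x := by
      rcases lt_or_ge x (1/6) with h | h
      · exact absurd ⟨hc, h⟩ hns
      · exact h
    rcases lt_or_ge x (1/5) with h5 | h5
    · rw [v_sixth h6 h5]; linarith
    · rcases lt_or_ge x (1/4) with h4 | h4
      · rw [v_fifth h5 h4]; linarith
      · rw [v_quarter h4 h3]; linarith

/-- global max of v -/
lemma v_le_max {a : ℝ} (hM : 10000 ≤ M) (h0 : 0 < a) (h1 : a ≤ 1) :
    v M a ≤ 529/1000 := by
  have hMR := MR hM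
  by_cases ha1 : a = 1
  · unfold v; rw [if_pos ha1]; norm_num
  have ha1' : a < 1 := lt_of_le_of_ne h1 ha1
  rcases le_or_gt (1/2) a with h | h
  · rw [v_half h ha1']
  rcases le_or_gt (1/3) a with h3 | h3
  · rw [v_third h3 h]
    have := C_nonneg
    linarith
  rcases le_or_gt (1/4) a with h4 | h4
  · rw [v_quarter h4 h3]; norm_num
  rcases le_or_gt (1/5) a with h5 | h5
  · rw [v_fifth h5 h4]; norm_num
  rcases le_or_gt (1/6) a with h6 | h6
  · rw [v_sixth h6 h5]; norm_num
  · -- a < 1/6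
    have h6' : a < 1/((6:ℕ):ℝ) := by norm_num; linarith
    have hb := bon_rate (M := M) (x := a) (n := 6) hM (le_refl 6)
      (by push_cast; linarith) h0 h6'
    have h6'' : a / ((6:ℕ):ℝ) = a / 6 := by norm_num
    rw [h6''] at hb
    linarith

end PW

/-! ### multiset machinery -/

section MS

variable {M : ℕ}

/-- total bonus of a multiset -/
def bsum (M : ℕ) (S : Multiset ℝ) : ℝ := (S.map (fun x => v M x - x)).sum

def epsl (M : ℕ) : ℝ := 1/((M:ℝ)*((M:ℝ)-1))

lemma epsl_nonneg (hM : 10000 ≤ M) : 0 ≤ epsl M := by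
  have h := MR hM
  have h1 : (0:ℝ) < (M:ℝ) - 1 := by linarith
  have h2 : (0:ℝ) < (M:ℝ) := by linarith
  unfold epsl
  positivity

lemma vsum_eq (S : Multiset ℝ) : (S.map (v M)).sum = S.sum + bsum M S := by
  unfold bsum
  induction S using Multiset.induction with
  | empty => simp
  | cons a s ih =>
      simp only [Multiset.map_cons, Multiset.sum_cons, ih]
      ring

lemma bsum_cons (x : ℝ) (S : Multiset ℝ) :
    bsum M (x ::ₘ S) = (v M x - x) + bsum M S := by
  unfold bsum
  simp

lemma bsum_add (S T : Multiset ℝ) : bsum M (S + T) = bsum M S + bsum M T := by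
  unfold bsum
  simp

lemma sum_map_mul (S : Multiset ℝ) (c : ℝ) : (S.map (fun y => y * c)).sum = S.sum * c := by
  induction S using Multiset.induction with
  | empty => simp
  | cons a s ih => simp [ih, add_mul]

lemma sum_map_affine (S : Multiset ℝ) (a b : ℝ) :
    (S.map (fun y => a * y + b)).sum = a * S.sum + (S.card : ℝ) * b := by
  induction S using Multiset.induction with
  | empty => simp
  | cons x s ih =>
      simp only [Multiset.map_cons, Multiset.sum_cons, ih, Multiset.card_cons]
      push_cast
      ring

lemma bsum_le_of_pointwise (S : Multiset ℝ) (g : ℝ → ℝ)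
    (h : ∀ y ∈ S, v M y - y ≤ g y) : bsum M S ≤ (S.map g).sum :=
  Multiset.sum_map_le_sum_map _ _ h

/-- rate bound -/
lemma bsum_rate (hM : 10000 ≤ M) (n : ℕ) (hn : 6 ≤ n) (hnM : (n:ℝ) ≤ (M:ℝ)-1)
    (S : Multiset ℝ) (h : ∀ y ∈ S, 0 < y ∧ y < 1/(n:ℝ)) :
    bsum M S ≤ S.sum * (1/(n:ℝ)) := by
  have h1 : bsum M S ≤ (S.map (fun y => y * (1/(n:ℝ)))).sum := by
    apply bsum_le_of_pointwise
    intro y hy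
    have hb := bon_rate (M := M) (x := y) (n := n) hM hn hnM (h y hy).1 (h y hy).2
    have hn0 : (0:ℝ) < (n:ℝ) := by
      have : (6:ℝ) ≤ (n:ℝ) := by exact_mod_cast hn
      linarith
    calc v M y - y ≤ y / (n:ℝ) := hb
      _ = y * (1/(n:ℝ)) := by field_simp
  rw [sum_map_mul] at h1
  exact h1

/-- tiny bound -/
lemma bsum_tiny (hM : 10000 ≤ M) (S : Multiset ℝ)
    (h : ∀ y ∈ S, 0 < y ∧ y < 1/(M:ℝ)) :
    bsum M S ≤ S.sum * (1/((M:ℝ)-1)) := by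
  have h1 : bsum M S ≤ (S.map (fun y => y * (1/((M:ℝ)-1)))).sum := by
    apply bsum_le_of_pointwise
    intro y hy
    have hb := bon_tiny (M := M) hM (h y hy).1 (h y hy).2
    have hM1 : (0:ℝ) < (M:ℝ) - 1 := by have := MR hM; linarith
    rw [hb]
    rw [div_eq_mul_one_div]
  rw [sum_map_mul] at h1
  exact h1

lemma sum_nonneg_of_pos (S : Multiset ℝ) (h : ∀ y ∈ S, 0 < y) : 0 ≤ S.sum :=
  Multiset.sum_nonneg (fun y hy => (h y hy).le)

lemma mem_le_sum (S : Multiset ℝ) (h : ∀ y ∈ S, 0 < y) {y : ℝ} (hy : y ∈ S) : y ≤ S.sum :=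
  Multiset.single_le_sum (fun z hz => (h z hz).le) y hy

lemma erase_sum (S : Multiset ℝ) {y : ℝ} (hy : y ∈ S) : (S.erase y).sum = S.sum - y := by
  have h := Multiset.cons_erase hy
  have : S.sum = y + (S.erase y).sum := by
    conv_lhs => rw [← h]
    simp
  linarith

lemma bsum_erase (S : Multiset ℝ) {y : ℝ} (hy : y ∈ S) :
    bsum M S = (v M y - y) + bsum M (S.erase y) := by
  conv_lhs => rw [← Multiset.cons_erase hy]
  rw [bsum_cons]

lemma card_mul_le_sum (S : Multiset ℝ) (c : ℝ) (h : ∀ y ∈ S, c ≤ y) :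
    (S.card : ℝ) * c ≤ S.sum := by
  have := Multiset.card_nsmul_le_sum h
  rwa [nsmul_eq_mul] at this

lemma bsum_le_card_mul (S : Multiset ℝ) (c : ℝ) (h : ∀ y ∈ S, v M y - y ≤ c) :
    bsum M S ≤ (S.card : ℝ) * c := by
  have h1 : (S.map (fun x => v M x - x)).sum ≤ (S.map (fun x => v M x - x)).card • c := by
    apply Multiset.sum_le_card_nsmul
    intro x hx
    obtain ⟨y, hy, rfl⟩ := Multiset.mem_map.1 hx
    exact h y hy
  rw [Multiset.card_map, nsmul_eq_mul] at h1
  exact h1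

/-- the LP bound : valid on multisets of items in (0,1/3) -/
lemma bsum_LP (hM : 10000 ≤ M) (S : Multiset ℝ)
    (h : ∀ y ∈ S, 0 < y ∧ y < 1/3) :
    bsum M S ≤ (3/20) * S.sum
      + ((S.filter (fun y => 1/7 ≤ y ∧ y < 1/6)).card : ℝ) * (1/420) := by
  classical
  set p := fun y : ℝ => 1/7 ≤ y ∧ y < 1/6 with hp
  have hsplit : S.filter p + S.filter (fun y => ¬ p y) = S := Multiset.filter_add_not p S
  set F := S.filter p with hF
  set G := S.filter (fun y => ¬ p y) with hG
  have hFS : ∀ y ∈ F, y ∈ S := fun y hy => Multiset.mem_of_mem_filter hy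
  have hGS : ∀ y ∈ G, y ∈ S := fun y hy => Multiset.mem_of_mem_filter hy
  have hbF : bsum M F ≤ (3/20) * F.sum + (F.card : ℝ) * (1/420) := by
    have h1 : bsum M F ≤ (F.map (fun y => (3/20) * y + 1/420)).sum := by
      apply bsum_le_of_pointwise
      intro y hy
      have hpy : p y := (Multiset.mem_filter.1 hy).2
      have hb := bon_six (M := M) hM hpy.1 hpy.2
      have : (3/20) * (1/7 : ℝ) + 1/420 = 1/42 + 1/420 + 1/420 - 2/420 := by norm_num
      nlinarith [hpy.1]
    rw [sum_map_affine] at h1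
    linarith
  have hbG : bsum M G ≤ (3/20) * G.sum := by
    have h1 : bsum M G ≤ (G.map (fun y => y * (3/20))).sum := by
      apply bsum_le_of_pointwise
      intro y hy
      have hny : ¬ p y := (Multiset.mem_filter.1 hy).2
      have := bon_LP_item (M := M) hM (h y (hGS y hy)).1 (h y (hGS y hy)).2 hny
      linarith
    rw [sum_map_mul] at h1
    linarith
  have hsum : F.sum + G.sum = S.sum := by rw [← hsplit]; simp
  have hbsum : bsum M F + bsum M G = bsum M S := by rw [← hsplit, bsum_add]
  linarith

/-- SP : small-budget lemma, budget 1/7, gives 1/56 + 1/3136 -/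
lemma SP (hM : 10000 ≤ M) (S : Multiset ℝ) (h0 : ∀ y ∈ S, 0 < y)
    (hs : S.sum < 1/7) : bsum M S ≤ 1/56 + 1/3136 := by
  classical
  have hMR := MR hM
  by_cases hex : ∃ z ∈ S, 1/8 ≤ z
  · obtain ⟨z, hz, hz8⟩ := hex
    have hzsum : z ≤ S.sum := mem_le_sum S h0 hz
    have hz7 : z < 1/7 := lt_of_le_of_lt hzsum hs
    have hbz : v M z - z ≤ 1/56 := bon_seven hM hz8 hz7
    have hRsum : (S.erase z).sum < 1/56 := by
      rw [erase_sum S hz]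
      linarith
    have hR0 : ∀ y ∈ S.erase z, 0 < y := fun y hy => h0 y (Multiset.mem_of_mem_erase hy)
    have hRlt : ∀ y ∈ S.erase z, 0 < y ∧ y < 1/((56:ℕ):ℝ) := by
      intro y hy
      refine ⟨hR0 y hy, ?_⟩
      have := mem_le_sum (S.erase z) hR0 hy
      push_cast
      linarith
    have hrate := bsum_rate hM 56 (by norm_num) (by push_cast; linarith) (S.erase z) hRlt
    have hb := bsum_erase (M := M) S hz
    have h56 : (S.erase z).sum * (1/((56:ℕ):ℝ)) ≤ 1/3136 := by
      push_cast
      nlinarith [sum_nonneg_of_pos (S.erase z) hR0]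
    linarith
  · push_neg at hex
    have hrate := bsum_rate hM 8 (by norm_num) (by push_cast; linarith) S
      (fun y hy => ⟨h0 y hy, by have := hex y hy; push_cast; linarith⟩)
    have : S.sum * (1/((8:ℕ):ℝ)) ≤ 1/56 := by
      push_cast
      nlinarith [sum_nonneg_of_pos S h0]
    linarith

/-- Sylvester-chain lemma -/
lemma syl (hM : 10000 ≤ M) (d : ℕ) :
    ∀ k (S : Multiset ℝ), t k ≤ M → M - t k ≤ d → (∀ y ∈ S, 0 < y) →
    S.sum < 1 / ((t k : ℝ) - 1) →
    bsum M S ≤ tail k + epsl M := by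
  induction d using Nat.strong_induction_on with
  | _ d ih =>
  intro k S htk hd h0 hsum
  have hMR := MR hM
  have ht21 := t_real_ge k
  have htpos : (0:ℝ) < (t k : ℝ) := by linarith
  have htM : (t k : ℝ) ≤ (M:ℝ) := by exact_mod_cast htk
  have hrecip : 1/((t k:ℝ)-1) - 1/((t k):ℝ) = ff (k+1) := by
    unfold ff
    rw [t_succ_real k]
    have h1 : ((t k:ℝ)-1) ≠ 0 := by linarith
    have h2 : ((t k):ℝ) ≠ 0 := by linarith
    field_simp
    ring
  have hffpos := ff_pos (k+1)
  by_cases hex : ∃ y ∈ S, 1/(t k : ℝ) ≤ y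
  · obtain ⟨y, hy, hy1⟩ := hex
    have hysum : y ≤ S.sum := mem_le_sum S h0 hy
    have hy2 : y < 1/((t k:ℝ)-1) := lt_of_le_of_lt hysum hsum
    have hcast : ((t k - 1 : ℕ):ℝ) = (t k:ℝ) - 1 := by
      have := t_ge k
      push_cast [Nat.cast_sub (by omega : 1 ≤ t k)]
      ring
    have hv : v M y = 1/((t k : ℝ) - 1) := by
      have h1 : 1/(((t k - 1 : ℕ):ℝ)+1) ≤ y := by
        rw [hcast]
        have : (t k:ℝ) - 1 + 1 = (t k : ℝ) := by ring
        rw [this]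
        exact hy1
      have h2 : y < 1/((t k - 1 : ℕ):ℝ) := by rw [hcast]; exact hy2
      have h3 : ((t k - 1 : ℕ):ℝ) + 1 ≤ (M:ℝ) := by rw [hcast]; linarith
      have h4 : 6 ≤ t k - 1 := by have := t_ge k; omega
      have := v_class (M := M) (x := y) (i := t k - 1) hM h4 h1 h2 h3
      rw [this, hcast]
    have hbon : v M y - y ≤ ff (k+1) := by
      rw [hv]
      linarith
    have hRsum : (S.erase y).sum < ff (k+1) := by
      rw [erase_sum S hy]
      linarith
    have hR0 : ∀ z ∈ S.erase y, 0 < z := fun z hz => h0 z (Multiset.mem_of_mem_erase hz)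
    have hb := bsum_erase (M := M) S hy
    by_cases hnext : t (k+1) ≤ M
    · have hd' : M - t (k+1) < d := by
        have h1 := t_lt_succ k
        omega
      have hIH := ih (M - t (k+1)) hd' (k+1) (S.erase y) hnext (le_refl _) hR0
        (by unfold ff at hRsum; exact hRsum)
      rw [tail_rec k]
      linarith
    · have hM1 : (M:ℝ) ≤ (t (k+1):ℝ) - 1 := by
        have h1 : M + 1 ≤ t (k+1) := by omega
        have h2 : ((M:ℕ):ℝ) + 1 ≤ (t (k+1):ℝ) := by exact_mod_cast h1
        linarith
      have hff : ff (k+1) ≤ 1/(M:ℝ) := by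
        unfold ff
        apply one_div_le_one_div_of_le (by linarith) hM1
      have htiny := bsum_tiny hM (S.erase y)
        (fun z hz => ⟨hR0 z hz, by
          have := mem_le_sum (S.erase y) hR0 hz
          linarith⟩)
      have hsle : (S.erase y).sum ≤ 1/(M:ℝ) := le_trans hRsum.le hff
      have heps : (S.erase y).sum * (1/((M:ℝ)-1)) ≤ epsl M := by
        have hM2 : (0:ℝ) < (M:ℝ) - 1 := by linarith
        have h1 : (S.erase y).sum * (1/((M:ℝ)-1)) ≤ (1/(M:ℝ)) * (1/((M:ℝ)-1)) := by
          apply mul_le_mul_of_nonneg_right hsle (by positivity)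
        have h2 : (1/(M:ℝ)) * (1/((M:ℝ)-1)) = epsl M := by
          unfold epsl
          rw [div_mul_div_comm, one_mul]
        linarith
      have htail := ff_le_tail k
      linarith
  · push_neg at hex
    by_cases hlt : t k + 1 ≤ M
    · have hn6 : 6 ≤ t k := by have := t_ge k; omega
      have hnM : ((t k:ℕ):ℝ) ≤ (M:ℝ) - 1 := by
        have h1 : ((t k:ℕ):ℝ) + 1 ≤ (M:ℝ) := by exact_mod_cast hlt
        linarith
      have hrate := bsum_rate hM (t k) hn6 hnM S (fun y hy => ⟨h0 y hy, hex y hy⟩)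
      have hkey : S.sum * (1/((t k):ℝ)) ≤ ff (k+1) := by
        unfold ff
        rw [t_succ_real k]
        have h1 : S.sum * (1/((t k):ℝ)) ≤ (1/((t k:ℝ)-1)) * (1/((t k):ℝ)) := by
          apply mul_le_mul_of_nonneg_right hsum.le (by positivity)
        have h2 : (1/((t k:ℝ)-1)) * (1/((t k):ℝ)) = 1/((t k:ℝ) * ((t k:ℝ)-1)) := by
          rw [div_mul_div_comm, one_mul, mul_comm]
        linarith
      have htail := ff_le_tail k
      have heps := epsl_nonneg hM
      linarith
    · have hteq : t k = M := by omega
      rw [hteq] at hsum hex ht21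
      have hM2 : (0:ℝ) < (M:ℝ) - 1 := by linarith
      have htiny := bsum_tiny hM S (fun y hy => ⟨h0 y hy, by
        have h1 := hex y hy
        have h2 : 1/(M:ℝ) ≤ 1/((M:ℝ)) := le_refl _
        linarith [hex y hy]⟩)
      have hb2 : bsum M S ≤ (1/((M:ℝ)-1)) * (1/((M:ℝ)-1)) := by
        have h1 : S.sum * (1/((M:ℝ)-1)) ≤ (1/((M:ℝ)-1)) * (1/((M:ℝ)-1)) := by
          apply mul_le_mul_of_nonneg_right ?_ (by positivity)
          linarith
        linarith
      have hff2 : ff (k+1) = epsl M := by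
        unfold ff epsl
        rw [t_succ_real k, hteq]
      have hsq : (1/((M:ℝ)-1)) * (1/((M:ℝ)-1)) ≤ 2 * epsl M := by
        have hMpos : (0:ℝ) < (M:ℝ) := by linarith
        have h2 : 2 * (epsl M) = 2 / ((M:ℝ)*((M:ℝ)-1)) := by unfold epsl; ring
        rw [div_mul_div_comm, one_mul, h2,
          div_le_div_iff₀ (mul_pos hM2 hM2) (mul_pos hMpos hM2)]
        nlinarith
      have htail := ff_le_tail k
      linarith

end MS

/-! ### the main case analyses -/

section Main

variable {M : ℕ}

lemma vsum_erase (S : Multiset ℝ) {y : ℝ} (hy : y ∈ S) :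
    (S.map (v M)).sum = v M y + ((S.erase y).map (v M)).sum := by
  conv_lhs => rw [← Multiset.cons_erase hy]
  simp

lemma t0_le (hM : 10000 ≤ M) : t 0 ≤ M := by
  show 22 ≤ M
  omega

lemma t0_real : ((t 0 : ℕ):ℝ) - 1 = 21 := by norm_num [t]

/-- BG : bonus bound for budget 1/3 -/
lemma BG (hM : 10000 ≤ M) (S : Multiset ℝ) (h0 : ∀ y ∈ S, 0 < y)
    (hs : S.sum < 1/3) : bsum M S ≤ C + epsl M := by
  classical
  have hMR := MR hM
  have hC := C_ge
  have heps := epsl_nonneg hM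
  have hnn : 0 ≤ S.sum := sum_nonneg_of_pos S h0
  by_cases h3 : ∃ y ∈ S, 1/4 ≤ y
  · obtain ⟨y, hy, hy4⟩ := h3
    have hy3 : y < 1/3 := lt_of_le_of_lt (mem_le_sum S h0 hy) hs
    have hv : v M y = 287/1000 := v_quarter hy4 hy3
    have hR0 : ∀ z ∈ S.erase y, 0 < z := fun z hz => h0 z (Multiset.mem_of_mem_erase hz)
    have hRsum : (S.erase y).sum < 1/12 := by rw [erase_sum S hy]; linarith
    have hRnn : 0 ≤ (S.erase y).sum := sum_nonneg_of_pos _ hR0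
    have hrate := bsum_rate hM 12 (by norm_num) (by push_cast; linarith) (S.erase y)
      (fun z hz => ⟨hR0 z hz, by
        have := mem_le_sum (S.erase y) hR0 hz
        push_cast
        linarith⟩)
    have hb := bsum_erase (M := M) S hy
    have h12 : (S.erase y).sum * (1/((12:ℕ):ℝ)) ≤ 1/144 := by push_cast; linarith
    rw [hb, hv]
    linarith
  push_neg at h3
  by_cases h4 : ∃ y ∈ S, 1/5 ≤ y
  · obtain ⟨y, hy, hy5⟩ := h4
    have hy4 : y < 1/4 := h3 y hy
    have hv : v M y = 23/100 := v_fifth hy5 hy4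
    have hR0 : ∀ z ∈ S.erase y, 0 < z := fun z hz => h0 z (Multiset.mem_of_mem_erase hz)
    have hRsum : (S.erase y).sum < 2/15 := by rw [erase_sum S hy]; linarith
    have hRnn : 0 ≤ (S.erase y).sum := sum_nonneg_of_pos _ hR0
    have hrate := bsum_rate hM 7 (by norm_num) (by push_cast; linarith) (S.erase y)
      (fun z hz => ⟨hR0 z hz, by
        have := mem_le_sum (S.erase y) hR0 hz
        push_cast
        linarith⟩)
    have hb := bsum_erase (M := M) S hy
    have h7 : (S.erase y).sum * (1/((7:ℕ):ℝ)) ≤ 2/105 := by push_cast; linarith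
    rw [hb, hv]
    linarith
  push_neg at h4
  by_cases h5 : ∃ y ∈ S, 1/6 ≤ y
  · obtain ⟨y, hy, hy6⟩ := h5
    have hy5 : y < 1/5 := h4 y hy
    have hv : v M y = 23/125 := v_sixth hy6 hy5
    have hR0 : ∀ z ∈ S.erase y, 0 < z := fun z hz => h0 z (Multiset.mem_of_mem_erase hz)
    have hRsum : (S.erase y).sum < 1/6 := by rw [erase_sum S hy]; linarith
    have hRnn : 0 ≤ (S.erase y).sum := sum_nonneg_of_pos _ hR0
    have hrate := bsum_rate hM 6 (by norm_num) (by push_cast; linarith) (S.erase y)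
      (fun z hz => ⟨hR0 z hz, by
        have := mem_le_sum (S.erase y) hR0 hz
        push_cast
        linarith⟩)
    have hb := bsum_erase (M := M) S hy
    have h6 : (S.erase y).sum * (1/((6:ℕ):ℝ)) ≤ 1/36 := by push_cast; linarith
    rw [hb, hv]
    linarith
  push_neg at h5
  by_cases h6 : ∃ y ∈ S, 1/7 ≤ y
  · obtain ⟨y, hy, hy7⟩ := h6
    have hy6 : y < 1/6 := h5 y hy
    have hbony : v M y - y ≤ 1/42 := bon_six hM hy7 hy6
    have hR0 : ∀ z ∈ S.erase y, 0 < z := fun z hz => h0 z (Multiset.mem_of_mem_erase hz)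
    have hRsum : (S.erase y).sum < 4/21 := by rw [erase_sum S hy]; linarith
    have hb := bsum_erase (M := M) S hy
    by_cases h6b : ∃ z ∈ S.erase y, 1/7 ≤ z
    · obtain ⟨z, hz, hz7⟩ := h6b
      have hz6 : z < 1/6 := h5 z (Multiset.mem_of_mem_erase hz)
      have hbonz : v M z - z ≤ 1/42 := bon_six hM hz7 hz6
      have hR20 : ∀ w ∈ (S.erase y).erase z, 0 < w :=
        fun w hw => hR0 w (Multiset.mem_of_mem_erase hw)
      have hR2sum : ((S.erase y).erase z).sum < 1/21 := by
        rw [erase_sum (S.erase y) hz]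
        linarith
      have hsyl := syl hM M 0 ((S.erase y).erase z) (t0_le hM) (by omega) hR20
        (by rw [t0_real]; exact hR2sum)
      have hb2 := bsum_erase (M := M) (S.erase y) hz
      have hCeq := C_eq
      have hff0 := ff_zero
      rw [hb, hb2]
      linarith
    · push_neg at h6b
      by_cases h7 : ∃ z ∈ S.erase y, 1/8 ≤ z
      · obtain ⟨z, hz, hz8⟩ := h7
        have hz7 : z < 1/7 := h6b z hz
        have hbonz : v M z - z ≤ 1/56 := bon_seven hM hz8 hz7
        have hR20 : ∀ w ∈ (S.erase y).erase z, 0 < w :=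
          fun w hw => hR0 w (Multiset.mem_of_mem_erase hw)
        have hR2sum : ((S.erase y).erase z).sum < 11/168 := by
          rw [erase_sum (S.erase y) hz]
          linarith
        have hR2nn : 0 ≤ ((S.erase y).erase z).sum := sum_nonneg_of_pos _ hR20
        have hrate := bsum_rate hM 15 (by norm_num) (by push_cast; linarith)
          ((S.erase y).erase z)
          (fun w hw => ⟨hR20 w hw, by
            have := mem_le_sum ((S.erase y).erase z) hR20 hw
            push_cast
            linarith⟩)
        have h15 : ((S.erase y).erase z).sum * (1/((15:ℕ):ℝ)) ≤ 11/2520 := by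
          push_cast
          linarith
        have hb2 := bsum_erase (M := M) (S.erase y) hz
        rw [hb, hb2]
        linarith
      · push_neg at h7
        have hRnn : 0 ≤ (S.erase y).sum := sum_nonneg_of_pos _ hR0
        have hrate := bsum_rate hM 8 (by norm_num) (by push_cast; linarith) (S.erase y)
          (fun z hz => ⟨hR0 z hz, by
            have := h7 z hz
            push_cast
            linarith⟩)
        have h8 : (S.erase y).sum * (1/((8:ℕ):ℝ)) ≤ 1/42 := by push_cast; linarith
        rw [hb]
        linarith
  · push_neg at h6
    have hrate := bsum_rate hM 7 (by norm_num) (by push_cast; linarith) S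
      (fun z hz => ⟨h0 z hz, by
        have := h6 z hz
        push_cast
        linarith⟩)
    have h7 : S.sum * (1/((7:ℕ):ℝ)) ≤ 1/21 := by push_cast; linarith
    linarith

/-- G1 : value bound for budget 1/3 -/
lemma G1 (hM : 10000 ≤ M) (S : Multiset ℝ) (h0 : ∀ y ∈ S, 0 < y)
    (hs : S.sum < 1/3) : (S.map (v M)).sum ≤ 1/3 + C + epsl M := by
  rw [vsum_eq]
  have := BG hM S h0 hs
  linarith

end Main

/-! ### G2, G3, P and the theorem -/

section Main2

variable {M : ℕ}

lemma card_le_of_small (m : ℕ) (q : ℝ) (h : (m:ℝ)*(1/7) ≤ q) (n : ℕ)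
    (hn : q < ((n:ℝ)+1)*(1/7)) : m ≤ n := by
  by_contra hc
  push_neg at hc
  have h1 : ((n:ℝ)+1) ≤ (m:ℝ) := by exact_mod_cast hc
  nlinarith

/-- G2 : bonus bound for budget 2/3, items < 1/3 -/
lemma G2 (hM : 10000 ≤ M) (S : Multiset ℝ) (h : ∀ y ∈ S, 0 < y ∧ y < 1/3)
    (hs : S.sum < 2/3) : bsum M S ≤ 413/6000 + (3/4)*C := by
  classical
  have hMR := MR hM
  have hC := C_ge
  have h0 : ∀ y ∈ S, 0 < y := fun y hy => (h y hy).1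
  have hnn := sum_nonneg_of_pos S h0
  by_cases hB : ∃ y ∈ S, 1/6 ≤ y
  · obtain ⟨y, hy, hy6⟩ := hB
    have hy3 : y < 1/3 := (h y hy).2
    have hR0 : ∀ z ∈ S.erase y, 0 < z := fun z hz => h0 z (Multiset.mem_of_mem_erase hz)
    have hRmem : ∀ z ∈ S.erase y, 0 < z ∧ z < 1/3 :=
      fun z hz => h z (Multiset.mem_of_mem_erase hz)
    have hb := bsum_erase (M := M) S hy
    have hRnn := sum_nonneg_of_pos _ hR0
    have hLP := bsum_LP hM (S.erase y) hRmem
    -- six count on the rest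
    set p := fun z : ℝ => 1/7 ≤ z ∧ z < 1/6 with hpdef
    set F := (S.erase y).filter p with hF
    set G := (S.erase y).filter (fun z => ¬ p z) with hG
    have hsplit : F + G = S.erase y := Multiset.filter_add_not p (S.erase y)
    have hFmem : ∀ z ∈ F, 1/7 ≤ z ∧ z < 1/6 := fun z hz => (Multiset.mem_filter.1 hz).2
    have hG0 : ∀ z ∈ G, 0 < z := fun z hz => hR0 z (Multiset.mem_of_mem_filter hz)
    have hsum2 : F.sum + G.sum = (S.erase y).sum := by rw [← hsplit]; simp
    have hbs2 : bsum M F + bsum M G = bsum M (S.erase y) := by rw [← hsplit, bsum_add]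
    have hGnn := sum_nonneg_of_pos G hG0
    have hcard7 : ((F.card):ℝ) * (1/7) ≤ F.sum :=
      card_mul_le_sum F (1/7) (fun z hz => (hFmem z hz).1)
    rcases le_or_gt (1/4) y with h4 | h4
    · -- class 3
      have hv : v M y = 287/1000 := v_quarter h4 hy3
      have hRsum : (S.erase y).sum < 5/12 := by rw [erase_sum S hy]; linarith
      have hm : F.card ≤ 2 := by
        apply card_le_of_small _ ((S.erase y).sum) (by linarith) 2
        norm_num
        linarith
      have hmr : ((F.card):ℝ) ≤ 2 := by exact_mod_cast hm
      rw [hb, hv]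
      linarith
    rcases le_or_gt (1/5) y with h5 | h5
    · -- class 4
      have hv : v M y = 23/100 := v_fifth h5 h4
      have hRsum : (S.erase y).sum < 7/15 := by rw [erase_sum S hy]; linarith
      have hm : F.card ≤ 3 := by
        apply card_le_of_small _ ((S.erase y).sum) (by linarith) 3
        norm_num
        linarith
      by_cases hm2 : F.card ≤ 2
      · have hmr : ((F.card):ℝ) ≤ 2 := by exact_mod_cast hm2
        rw [hb, hv]
        linarith
      · -- F.card = 3 : peel the three sixes
        have hm3 : F.card = 3 := by omega
        have hmr : ((F.card):ℝ) = 3 := by exact_mod_cast hm3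
        have hbF : bsum M F ≤ ((F.card):ℝ) * (1/42) :=
          bsum_le_card_mul F (1/42) (fun z hz => bon_six hM (hFmem z hz).1 (hFmem z hz).2)
        have hGsum : G.sum < 4/105 := by
          have : (3:ℝ) * (1/7) ≤ F.sum := by rw [← hmr]; exact hcard7
          linarith
        have hrate := bsum_rate hM 26 (by norm_num) (by push_cast; linarith) G
          (fun z hz => ⟨hG0 z hz, by
            have := mem_le_sum G hG0 hz
            push_cast
            linarith⟩)
        have h26 : G.sum * (1/((26:ℕ):ℝ)) ≤ 2/1365 := by push_cast; linarith
        rw [hb, hv]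
        rw [← hbs2]
        rw [hmr] at hbF
        linarith
    · -- class 5
      have hv : v M y = 23/125 := v_sixth hy6 h5
      have hRsum : (S.erase y).sum < 1/2 := by rw [erase_sum S hy]; linarith
      have hm : F.card ≤ 3 := by
        apply card_le_of_small _ ((S.erase y).sum) (by linarith) 3
        norm_num
        linarith
      have hmr : ((F.card):ℝ) ≤ 3 := by exact_mod_cast hm
      rw [hb, hv]
      linarith
  · -- all items < 1/6
    push_neg at hB
    set p := fun z : ℝ => 1/7 ≤ z ∧ z < 1/6 with hpdef
    set F := S.filter p with hF
    set G := S.filter (fun z => ¬ p z) with hG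
    have hsplit : F + G = S := Multiset.filter_add_not p S
    have hFmem : ∀ z ∈ F, 1/7 ≤ z ∧ z < 1/6 := fun z hz => (Multiset.mem_filter.1 hz).2
    have hG0 : ∀ z ∈ G, 0 < z := fun z hz => h0 z (Multiset.mem_of_mem_filter hz)
    have hG7 : ∀ z ∈ G, z < 1/7 := by
      intro z hz
      have h6 := hB z (Multiset.mem_of_mem_filter hz)
      have hnp : ¬ p z := (Multiset.mem_filter.1 hz).2
      by_contra hc
      push_neg at hc
      exact hnp ⟨hc, h6⟩
    have hsum2 : F.sum + G.sum = S.sum := by rw [← hsplit]; simp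
    have hbs2 : bsum M F + bsum M G = bsum M S := by rw [← hsplit, bsum_add]
    have hGnn := sum_nonneg_of_pos G hG0
    have hcard7 : ((F.card):ℝ) * (1/7) ≤ F.sum :=
      card_mul_le_sum F (1/7) (fun z hz => (hFmem z hz).1)
    have hbF : bsum M F ≤ ((F.card):ℝ) * (1/42) :=
      bsum_le_card_mul F (1/42) (fun z hz => bon_six hM (hFmem z hz).1 (hFmem z hz).2)
    have hm : F.card ≤ 4 := by
      apply card_le_of_small _ S.sum (by linarith) 4
      norm_num
      linarith
    by_cases hm2 : F.card ≤ 2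
    · have hmr : ((F.card):ℝ) ≤ 2 := by exact_mod_cast hm2
      have hLP := bsum_LP hM S h
      have hcc : (S.filter (fun y => 1/7 ≤ y ∧ y < 1/6)).card = F.card := rfl
      rw [hcc] at hLP
      linarith
    push_neg at hm2
    by_cases hm3 : F.card = 3
    · have hmr : ((F.card):ℝ) = 3 := by exact_mod_cast hm3
      have hGsum : G.sum < 5/21 := by
        have : (3:ℝ) * (1/7) ≤ F.sum := by rw [← hmr]; exact hcard7
        linarith
      have hrate := bsum_rate hM 7 (by norm_num) (by push_cast; linarith) G
        (fun z hz => ⟨hG0 z hz, by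
          have := hG7 z hz
          push_cast
          linarith⟩)
      have h7 : G.sum * (1/((7:ℕ):ℝ)) ≤ 5/147 := by push_cast; linarith
      have hbF' : bsum M F ≤ 1/14 := by
        calc bsum M F ≤ ((F.card):ℝ) * (1/42) := hbF
          _ = 3 * (1/42) := by rw [hmr]
          _ = 1/14 := by norm_num
      rw [← hbs2]
      linarith
    · have hm4 : F.card = 4 := by omega
      have hmr : ((F.card):ℝ) = 4 := by exact_mod_cast hm4
      have hGsum : G.sum < 2/21 := by
        have : (4:ℝ) * (1/7) ≤ F.sum := by rw [← hmr]; exact hcard7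
        linarith
      have hrate := bsum_rate hM 10 (by norm_num) (by push_cast; linarith) G
        (fun z hz => ⟨hG0 z hz, by
          have := mem_le_sum G hG0 hz
          push_cast
          linarith⟩)
      have h10 : G.sum * (1/((10:ℕ):ℝ)) ≤ 1/105 := by push_cast; linarith
      have hbF' : bsum M F ≤ 2/21 := by
        calc bsum M F ≤ ((F.card):ℝ) * (1/42) := hbF
          _ = 4 * (1/42) := by rw [hmr]
          _ = 2/21 := by norm_num
      rw [← hbs2]
      linarith

/-- G3 : bonus bound for budget 1, items < 1/3 -/
lemma G3 (hM : 10000 ≤ M) (S : Multiset ℝ) (h : ∀ y ∈ S, 0 < y ∧ y < 1/3)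
    (hs : S.sum < 1) : bsum M S ≤ 413/3000 + C/2 := by
  classical
  have hMR := MR hM
  have hC := C_ge
  have h0 : ∀ y ∈ S, 0 < y := fun y hy => (h y hy).1
  have hnn := sum_nonneg_of_pos S h0
  set p := fun z : ℝ => 1/7 ≤ z ∧ z < 1/6 with hpdef
  set F := S.filter p with hF
  set G := S.filter (fun z => ¬ p z) with hG
  have hsplit : F + G = S := Multiset.filter_add_not p S
  have hFmem : ∀ z ∈ F, 1/7 ≤ z ∧ z < 1/6 := fun z hz => (Multiset.mem_filter.1 hz).2
  have hG0 : ∀ z ∈ G, 0 < z := fun z hz => h0 z (Multiset.mem_of_mem_filter hz)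
  have hsum2 : F.sum + G.sum = S.sum := by rw [← hsplit]; simp
  have hbs2 : bsum M F + bsum M G = bsum M S := by rw [← hsplit, bsum_add]
  have hGnn := sum_nonneg_of_pos G hG0
  have hcard7 : ((F.card):ℝ) * (1/7) ≤ F.sum :=
    card_mul_le_sum F (1/7) (fun z hz => (hFmem z hz).1)
  have hLP := bsum_LP hM S h
  have hcc : (S.filter (fun y => 1/7 ≤ y ∧ y < 1/6)).card = F.card := rfl
  rw [hcc] at hLP
  have hFnn := sum_nonneg_of_pos F (fun z hz => h0 z (Multiset.mem_of_mem_filter hz))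
  by_cases hB : ∃ y ∈ S, 1/6 ≤ y
  · obtain ⟨y, hy, hy6⟩ := hB
    have hyG : y ∈ G := by
      rw [hG]
      apply Multiset.mem_filter.2
      refine ⟨hy, ?_⟩
      rw [hpdef]
      push_neg
      intro _
      linarith
    have hyle : y ≤ G.sum := mem_le_sum G hG0 hyG
    have hm : F.card ≤ 5 := by
      apply card_le_of_small _ (S.sum - 1/6) (by linarith) 5
      norm_num
      linarith
    have hmr : ((F.card):ℝ) ≤ 5 := by exact_mod_cast hm
    linarith
  · push_neg at hB
    have hm : F.card ≤ 6 := by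
      apply card_le_of_small _ S.sum (by linarith) 6
      norm_num
      linarith
    by_cases hm5 : F.card ≤ 5
    · have hmr : ((F.card):ℝ) ≤ 5 := by exact_mod_cast hm5
      linarith
    · have hm6 : F.card = 6 := by omega
      have hmr : ((F.card):ℝ) = 6 := by exact_mod_cast hm6
      have hbF : bsum M F ≤ ((F.card):ℝ) * (1/42) :=
        bsum_le_card_mul F (1/42) (fun z hz => bon_six hM (hFmem z hz).1 (hFmem z hz).2)
      have hGsum : G.sum < 1/7 := by
        have : (6:ℝ) * (1/7) ≤ F.sum := by rw [← hmr]; exact hcard7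
        linarith
      have hSP := SP hM G hG0 hGsum
      have hbF' : bsum M F ≤ 1/7 := by
        calc bsum M F ≤ ((F.card):ℝ) * (1/42) := hbF
          _ = 6 * (1/42) := by rw [hmr]
          _ = 1/7 := by norm_num
      rw [← hbs2]
      linarith

/-- the bound on the whole multiset T -/
lemma Pmain (hM : 10000 ≤ M) (S : Multiset ℝ) (h0 : ∀ y ∈ S, 0 < y)
    (hs : S.sum < 1) : (S.map (v M)).sum ≤ 3413/3000 + C/2 + epsl M := by
  classical
  have hMR := MR hM
  have hC := C_ge
  have hC0 := C_nonneg
  have heps := epsl_nonneg hM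
  have hnn := sum_nonneg_of_pos S h0
  by_cases h2 : ∃ x ∈ S, 1/2 ≤ x
  · obtain ⟨x, hx, hx2⟩ := h2
    have hx1 : x < 1 := lt_of_le_of_lt (mem_le_sum S h0 hx) hs
    have hv : v M x = 529/1000 := v_half hx2 hx1
    have hR0 : ∀ z ∈ S.erase x, 0 < z := fun z hz => h0 z (Multiset.mem_of_mem_erase hz)
    have hRsum : (S.erase x).sum < 1/2 := by rw [erase_sum S hx]; linarith
    have hRnn := sum_nonneg_of_pos _ hR0
    have hve := vsum_erase (M := M) S hx
    by_cases h2b : ∃ z ∈ S.erase x, 1/3 ≤ z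
    · obtain ⟨z, hz, hz3⟩ := h2b
      have hz2 : z < 1/2 := lt_of_le_of_lt (mem_le_sum (S.erase x) hR0 hz) hRsum
      have hvz : v M z = 2413/6000 - C/4 := v_third hz3 hz2
      have hR20 : ∀ w ∈ (S.erase x).erase z, 0 < w :=
        fun w hw => hR0 w (Multiset.mem_of_mem_erase hw)
      have hR2sum : ((S.erase x).erase z).sum < 1/6 := by
        rw [erase_sum (S.erase x) hz]
        linarith
      have hR2nn := sum_nonneg_of_pos _ hR20
      have hR2mem : ∀ w ∈ (S.erase x).erase z, 0 < w ∧ w < 1/3 := by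
        intro w hw
        refine ⟨hR20 w hw, ?_⟩
        have := mem_le_sum ((S.erase x).erase z) hR20 hw
        linarith
      have hLP := bsum_LP hM ((S.erase x).erase z) hR2mem
      have hcard7 : (((((S.erase x).erase z).filter (fun y => 1/7 ≤ y ∧ y < 1/6))).card : ℝ) * (1/7)
          ≤ (((S.erase x).erase z).filter (fun y => 1/7 ≤ y ∧ y < 1/6)).sum :=
        card_mul_le_sum _ (1/7) (fun w hw => (Multiset.mem_filter.1 hw).2.1)
      have hfle : (((S.erase x).erase z).filter (fun y => 1/7 ≤ y ∧ y < 1/6)).sum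
          ≤ ((S.erase x).erase z).sum := by
        have hsp := Multiset.filter_add_not (fun y : ℝ => 1/7 ≤ y ∧ y < 1/6) ((S.erase x).erase z)
        have hgnn : 0 ≤ (((S.erase x).erase z).filter (fun y => ¬(1/7 ≤ y ∧ y < 1/6))).sum :=
          sum_nonneg_of_pos _ (fun w hw => hR20 w (Multiset.mem_of_mem_filter hw))
        have : (((S.erase x).erase z).filter (fun y => 1/7 ≤ y ∧ y < 1/6)).sum
            + (((S.erase x).erase z).filter (fun y => ¬(1/7 ≤ y ∧ y < 1/6))).sum
            = ((S.erase x).erase z).sum := by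
          conv_rhs => rw [← hsp]
          rw [Multiset.sum_add]
        linarith
      have hm : ((((S.erase x).erase z).filter (fun y => 1/7 ≤ y ∧ y < 1/6)).card) ≤ 1 := by
        apply card_le_of_small _ (((S.erase x).erase z).sum) (by linarith) 1
        norm_num
        linarith
      have hmr : (((((S.erase x).erase z).filter (fun y => 1/7 ≤ y ∧ y < 1/6))).card : ℝ) ≤ 1 := by
        exact_mod_cast hm
      have hve2 := vsum_erase (M := M) (S.erase x) hz
      have hvv := vsum_eq (M := M) ((S.erase x).erase z)
      rw [hve, hve2, hvv, hv, hvz]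
      linarith
    · push_neg at h2b
      have hRmem : ∀ z ∈ S.erase x, 0 < z ∧ z < 1/3 :=
        fun z hz => ⟨hR0 z hz, h2b z hz⟩
      have hLP := bsum_LP hM (S.erase x) hRmem
      have hcard7 : ((((S.erase x).filter (fun y => 1/7 ≤ y ∧ y < 1/6))).card : ℝ) * (1/7)
          ≤ (((S.erase x)).filter (fun y => 1/7 ≤ y ∧ y < 1/6)).sum :=
        card_mul_le_sum _ (1/7) (fun w hw => (Multiset.mem_filter.1 hw).2.1)
      have hfle : ((S.erase x).filter (fun y => 1/7 ≤ y ∧ y < 1/6)).sum ≤ (S.erase x).sum := by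
        have hsp := Multiset.filter_add_not (fun y : ℝ => 1/7 ≤ y ∧ y < 1/6) (S.erase x)
        have hgnn : 0 ≤ ((S.erase x).filter (fun y => ¬(1/7 ≤ y ∧ y < 1/6))).sum :=
          sum_nonneg_of_pos _ (fun w hw => hR0 w (Multiset.mem_of_mem_filter hw))
        have : ((S.erase x).filter (fun y => 1/7 ≤ y ∧ y < 1/6)).sum
            + ((S.erase x).filter (fun y => ¬(1/7 ≤ y ∧ y < 1/6))).sum
            = (S.erase x).sum := by
          conv_rhs => rw [← hsp]
          rw [Multiset.sum_add]
        linarith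
      have hm : (((S.erase x).filter (fun y => 1/7 ≤ y ∧ y < 1/6)).card) ≤ 3 := by
        apply card_le_of_small _ ((S.erase x).sum) (by linarith) 3
        norm_num
        linarith
      have hmr : ((((S.erase x).filter (fun y => 1/7 ≤ y ∧ y < 1/6))).card : ℝ) ≤ 3 := by
        exact_mod_cast hm
      have hvv := vsum_eq (M := M) (S.erase x)
      rw [hve, hvv, hv]
      linarith
  · push_neg at h2
    by_cases h3 : ∃ x ∈ S, 1/3 ≤ x
    · obtain ⟨x, hx, hx3⟩ := h3
      have hx2 : x < 1/2 := h2 x hx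
      have hv : v M x = 2413/6000 - C/4 := v_third hx3 hx2
      have hR0 : ∀ z ∈ S.erase x, 0 < z := fun z hz => h0 z (Multiset.mem_of_mem_erase hz)
      have hRsum : (S.erase x).sum < 2/3 := by rw [erase_sum S hx]; linarith
      have hve := vsum_erase (M := M) S hx
      by_cases h3b : ∃ z ∈ S.erase x, 1/3 ≤ z
      · obtain ⟨z, hz, hz3⟩ := h3b
        have hz2 : z < 1/2 := h2 z (Multiset.mem_of_mem_erase hz)
        have hvz : v M z = 2413/6000 - C/4 := v_third hz3 hz2
        have hR20 : ∀ w ∈ (S.erase x).erase z, 0 < w :=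
          fun w hw => hR0 w (Multiset.mem_of_mem_erase hw)
        have hR2sum : ((S.erase x).erase z).sum < 1/3 := by
          rw [erase_sum (S.erase x) hz]
          linarith
        have hG1 := G1 hM ((S.erase x).erase z) hR20 hR2sum
        have hve2 := vsum_erase (M := M) (S.erase x) hz
        rw [hve, hve2, hv, hvz]
        linarith
      · push_neg at h3b
        have hRmem : ∀ z ∈ S.erase x, 0 < z ∧ z < 1/3 :=
          fun z hz => ⟨hR0 z hz, h3b z hz⟩
        have hG2 := G2 hM (S.erase x) hRmem hRsum
        have hvv := vsum_eq (M := M) (S.erase x)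
        rw [hve, hvv, hv]
        linarith
    · push_neg at h3
      have hmem : ∀ y ∈ S, 0 < y ∧ y < 1/3 := fun y hy => ⟨h0 y hy, h3 y hy⟩
      have hG3 := G3 hM S hmem hs
      have hvv := vsum_eq (M := M) S
      rw [hvv]
      linarith

end Main2

end OOE

/-- every bin (a multiset `T` of total size below 1 plus one
additional last item `a`) has total `v`-weight at most `R + 1/(M(M−1))`. -/
theorem stmt8 (M : ℕ) (hM : 10000 ≤ M)
    (T : Multiset ℝ) (hT : ∀ x ∈ T, 0 < x ∧ x ≤ 1)
    (hsum : T.sum < 1) (a : ℝ) (ha : 0 < a) (ha1 : a ≤ 1) :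
    v M a + (T.map (v M)).sum ≤ R + 1 / ((M : ℝ) * ((M : ℝ) - 1)) := by
  have h0 : ∀ x ∈ T, 0 < x := fun x hx => (hT x hx).1
  have hP := OOE.Pmain hM T h0 hsum
  have hva := OOE.v_le_max hM ha ha1
  have heq : R = 5/3 + C/2 := rfl
  have heps : OOE.epsl M = 1/((M:ℝ)*((M:ℝ)-1)) := rfl
  linarith

end
end

section
/- Let t_1 = 22 and t_{i+1} = t_i(t_i−1)+1 for i ≥ 1, and let C = Σ_{i=1}^∞ 1/(t_i−1). Let M ≥ 100 be an integer and define u : (0,1/21) → ℝ by u(x) = 1/n for x ∈ [1/(n+1), 1/n) with 21 ≤ n ≤ M−1, and u(x) = M·x/(M−1) for x ∈ (0, 1/M). Then for every finite multiset S of reals in (0,1/21) with Σ_{x∈S} x < 1/21, it holds that Σ_{x∈S} u(x) ≤ C + 1/(M(M−1)). -/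
/-!
Peel items off along the Sylvester sequence. With budget `1/(tᵢ − 1)`, if some item `x ≥ 1/M`
has `x ≥ 1/tᵢ`, then `u x = 1/(tᵢ − 1) = 1/tᵢ + 1/(tᵢ₊₁ − 1) ≤ x + 1/(tᵢ₊₁ − 1)`, and the
remaining items fit into the budget `1/(tᵢ − 1) − 1/tᵢ = 1/(tᵢ₊₁ − 1)`. Otherwise every item has
`u x ≤ (1 + 1/c) x` with `c = min tᵢ (M − 1)`, so the weight exceeds the total size by at most
`1/((tᵢ − 1) c) ≤ 1/(tᵢ₊₁ − 1) + 1/(M(M − 1))`. The excesses collected along the way are terms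
of the tail of `C` past `1/(t₀ − 1) = 1/21`, and the total size is below `1/21`.
-/

open scoped BigOperators

noncomputable section

/-- The harmonic-tail weight function: `u(x) = 1/n` for `x ∈ [1/(n+1), 1/n)`
with `21 ≤ n ≤ M−1` (here `n = ⌈1/x⌉−1`), and `u(x) = M·x/(M−1)` for
`x ∈ (0, 1/M)`. -/
def u (M : ℕ) (x : ℝ) : ℝ :=
  if 1 / (M : ℝ) ≤ x then 1 / ((⌈1 / x⌉₊ - 1 : ℕ) : ℝ)
  else (M : ℝ) * x / ((M : ℝ) - 1)

open Finset

lemma two_le_t (i : ℕ) : 2 ≤ t i := by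
  induction i with
  | zero => simp [t]
  | succ n ih =>
    show 2 ≤ t n * (t n - 1) + 1
    have : 1 ≤ t n - 1 := by omega
    nlinarith

lemma t_succ_sub_one (i : ℕ) : (t (i + 1) : ℝ) - 1 = t i * ((t i : ℝ) - 1) := by
  have h := two_le_t i
  show ((t i * (t i - 1) + 1 : ℕ) : ℝ) - 1 = _
  push_cast [Nat.cast_sub (by omega : 1 ≤ t i)]
  ring

lemma one_lt_t (i : ℕ) : (1 : ℝ) < t i := by
  exact_mod_cast two_le_t i

lemma one_div_t_succ_sub_one (i : ℕ) :
    1 / ((t (i + 1) : ℝ) - 1) = 1 / (t i * ((t i : ℝ) - 1)) := by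
  rw [t_succ_sub_one]

lemma one_div_t_sub_one_eq (i : ℕ) :
    1 / ((t i : ℝ) - 1) = 1 / t i + 1 / ((t (i + 1) : ℝ) - 1) := by
  have h : (t i : ℝ) - 1 ≠ 0 := by linarith [one_lt_t i]
  have h' : (t i : ℝ) ≠ 0 := by linarith [one_lt_t i]
  rw [one_div_t_succ_sub_one]
  field_simp
  ring

lemma one_div_t_sub_one_le (i : ℕ) : 1 / ((t i : ℝ) - 1) ≤ (1 / 2) ^ i := by
  induction i with
  | zero => norm_num [t]
  | succ n ih =>
    have h2 : (2 : ℝ) ≤ t n := by exact_mod_cast two_le_t n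
    rw [one_div_t_succ_sub_one, ← one_div_mul_one_div, mul_comm, pow_succ]
    gcongr

lemma summable_one_div_t_sub_one : Summable fun i ↦ 1 / ((t i : ℝ) - 1) :=
  (summable_geometric_two).of_nonneg_of_le
    (fun i ↦ div_nonneg zero_le_one (by linarith [one_lt_t i])) (by simpa using one_div_t_sub_one_le)

def Ctail (i : ℕ) : ℝ := C - ∑ j ∈ range (i + 1), 1 / ((t j : ℝ) - 1)

lemma Ctail_eq_add (i : ℕ) : Ctail i = 1 / ((t (i + 1) : ℝ) - 1) + Ctail (i + 1) := by
  simp only [Ctail, sum_range_succ _ (i + 1)]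
  ring

lemma one_div_t_succ_sub_one_le_Ctail (i : ℕ) : 1 / ((t (i + 1) : ℝ) - 1) ≤ Ctail i := by
  have h := summable_one_div_t_sub_one.sum_le_tsum (range (i + 2))
    (fun j _ ↦ div_nonneg zero_le_one (by linarith [one_lt_t j]))
  rw [sum_range_succ] at h
  simp only [Ctail, C]
  linarith

lemma one_div_mul_min_le {a b : ℕ} (ha : 2 ≤ a) (hb : 2 ≤ b) :
    1 / (((a : ℝ) - 1) * min (a : ℝ) ((b : ℝ) - 1))
      ≤ 1 / (a * ((a : ℝ) - 1)) + 1 / (b * ((b : ℝ) - 1)) := by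
  have ha' : (2 : ℝ) ≤ a := by exact_mod_cast ha
  have hb' : (2 : ℝ) ≤ b := by exact_mod_cast hb
  rcases lt_trichotomy a b with hab | rfl | hab
  · have hab' : (a : ℝ) ≤ b - 1 := by
      have : ((a + 1 : ℕ) : ℝ) ≤ b := by exact_mod_cast hab
      push_cast at this
      linarith
    rw [min_eq_left hab', mul_comm]
    exact le_add_of_nonneg_right (div_nonneg zero_le_one (by nlinarith))
  · rw [min_eq_right (by linarith), ← add_div, div_le_div_iff₀ (by nlinarith) (by nlinarith)]
    nlinarith
  · have hab' : (b : ℝ) ≤ a - 1 := by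
      have : ((b + 1 : ℕ) : ℝ) ≤ a := by exact_mod_cast hab
      push_cast at this
      linarith
    rw [min_eq_right (by linarith)]
    refine le_add_of_nonneg_of_le (div_nonneg zero_le_one (by nlinarith))
      (one_div_le_one_div_of_le (by nlinarith) ?_)
    gcongr
    linarith

lemma one_div_sub_one_le {m x c : ℝ} (hc : 0 < c) (hcm : c + 1 ≤ m) (hx : 1 / m ≤ x) :
    1 / (m - 1) ≤ (1 + 1 / c) * x := by
  have hm : 0 < m - 1 := by linarith
  have hm0 : 0 < m := by linarith
  have hsplit : 1 / (m - 1) = (1 + 1 / (m - 1)) * (1 / m) := by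
    field_simp
    ring
  rw [hsplit]
  gcongr
  linarith

lemma one_div_ceil_one_div_le {x : ℝ} (hx : 0 < x) : 1 / (⌈1 / x⌉₊ : ℝ) ≤ x :=
  (one_div_le (by positivity) hx).mpr (Nat.le_ceil _)

lemma ceil_one_div_eq {n : ℕ} {x : ℝ} (hn : 2 ≤ n) (hx : 1 / (n : ℝ) ≤ x)
    (hx' : x < 1 / ((n : ℝ) - 1)) : ⌈1 / x⌉₊ = n := by
  have hn' : (1 : ℝ) < n := by exact_mod_cast hn
  have hx0 : 0 < x := lt_of_lt_of_le (by positivity) hx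
  rw [Nat.ceil_eq_iff (by omega), Nat.cast_sub (by omega), Nat.cast_one]
  exact ⟨(lt_one_div hx0 (by linarith)).mp hx', (one_div_le (by linarith) hx0).mp hx⟩

lemma u_of_le {M : ℕ} {x : ℝ} (hx : 0 < x) (h : 1 / (M : ℝ) ≤ x) :
    u M x = 1 / ((⌈1 / x⌉₊ : ℝ) - 1) := by
  rw [u, if_pos h, Nat.cast_sub (Nat.one_le_ceil_iff.mpr (by positivity)), Nat.cast_one]

lemma u_of_lt {M : ℕ} {x : ℝ} (h : x < 1 / (M : ℝ)) : u M x = M * x / (M - 1) :=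
  if_neg h.not_ge

lemma sum_map_u_le_of_forall_lt {M : ℕ} (hM : 2 ≤ M) {S : Multiset ℝ} (hS : ∀ x ∈ S, 0 < x)
    {i : ℕ} (hsum : S.sum < 1 / ((t i : ℝ) - 1))
    (hsmall : ∀ x ∈ S, 1 / (M : ℝ) ≤ x → x < 1 / t i) :
    (S.map (u M)).sum ≤ S.sum + Ctail i + 1 / ((M : ℝ) * ((M : ℝ) - 1)) := by
  have hM' : (2 : ℝ) ≤ M := by exact_mod_cast hM
  have ht := one_lt_t i
  set c := min (t i : ℝ) ((M : ℝ) - 1) with hc_def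
  have hc : 0 < c := lt_min (by linarith) (by linarith)
  have hpoint : ∀ x ∈ S, u M x ≤ (1 + 1 / c) * x := by
    intro x hx
    by_cases hbig : 1 / (M : ℝ) ≤ x
    · have hceil : t i < ⌈1 / x⌉₊ :=
        Nat.lt_ceil.mpr ((lt_one_div (hS x hx) (by linarith)).mp (hsmall x hx hbig))
      have hceil' : (t i : ℝ) + 1 ≤ ⌈1 / x⌉₊ := by exact_mod_cast hceil
      rw [u_of_le (hS x hx) hbig]
      exact one_div_sub_one_le hc (by linarith [min_le_left (t i : ℝ) ((M : ℝ) - 1)])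
        (one_div_ceil_one_div_le (hS x hx))
    · have hMc : 1 / ((M : ℝ) - 1) ≤ 1 / c := one_div_le_one_div_of_le hc (min_le_right _ _)
      have hsplit : (M : ℝ) * x / (M - 1) = (1 + 1 / ((M : ℝ) - 1)) * x := by
        have : (M : ℝ) - 1 ≠ 0 := by linarith
        field_simp
        ring
      rw [u_of_lt (not_le.mp hbig), hsplit]
      gcongr
      exact (hS x hx).le
  have hweight : (S.map (u M)).sum ≤ (1 + 1 / c) * S.sum :=
    calc (S.map (u M)).sum ≤ (S.map fun x ↦ (1 + 1 / c) * x).sum :=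
          Multiset.sum_map_le_sum_map _ _ hpoint
      _ = (1 + 1 / c) * S.sum := by rw [Multiset.sum_map_mul_left, Multiset.map_id']
  have hexcess : S.sum * (1 / c) ≤ 1 / ((t i : ℝ) - 1) * (1 / c) := by gcongr
  have hmin := one_div_mul_min_le (two_le_t i) hM
  rw [← hc_def, ← one_div_t_succ_sub_one] at hmin
  rw [one_div_mul_one_div] at hexcess
  linarith [one_div_t_succ_sub_one_le_Ctail i]

theorem sum_map_u_le {M : ℕ} (hM : 2 ≤ M) {S : Multiset ℝ} (hS : ∀ x ∈ S, 0 < x) {i : ℕ}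
    (hsum : S.sum < 1 / ((t i : ℝ) - 1)) :
    (S.map (u M)).sum ≤ S.sum + Ctail i + 1 / ((M : ℝ) * ((M : ℝ) - 1)) := by
  induction S using Multiset.strongInductionOn generalizing i with
  | ih S ih =>
  by_cases hbig : ∃ x ∈ S, 1 / (M : ℝ) ≤ x ∧ 1 / (t i : ℝ) ≤ x
  swap
  · push Not at hbig
    exact sum_map_u_le_of_forall_lt hM hS hsum hbig
  obtain ⟨x, hx, hxM, hxt⟩ := hbig
  obtain ⟨S', rfl⟩ := Multiset.exists_cons_of_mem hx
  have hS' : ∀ y ∈ S', 0 < y := fun y hy ↦ hS y (Multiset.mem_cons_of_mem hy)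
  have hS'0 : 0 ≤ S'.sum := Multiset.sum_nonneg fun y hy ↦ (hS' y hy).le
  rw [Multiset.sum_cons] at hsum
  rw [Multiset.map_cons, Multiset.sum_cons, Multiset.sum_cons]
  have hsylvester := one_div_t_sub_one_eq i
  have hux : u M x ≤ x + 1 / ((t (i + 1) : ℝ) - 1) := by
    rw [u_of_le (hS x hx) hxM, ceil_one_div_eq (two_le_t i) hxt (by linarith), hsylvester]
    linarith
  have hrest := ih S' (Multiset.lt_cons_self S' x) hS' (i := i + 1) (by linarith)
  linarith [Ctail_eq_add i]

/-- any multiset of items of sizes in `(0, 1/21)` with total size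
below `1/21` has total `u`-weight at most `C + 1/(M(M−1))`. -/
theorem stmt9 (M : ℕ) (hM : 100 ≤ M)
    (S : Multiset ℝ) (hS : ∀ x ∈ S, 0 < x ∧ x < 1 / 21)
    (hsum : S.sum < 1 / 21) :
    (S.map (u M)).sum ≤ C + 1 / ((M : ℝ) * ((M : ℝ) - 1)) := by
  have ht0 : (t 0 : ℝ) - 1 = 21 := by norm_num [t]
  have hC : C = 1 / 21 + Ctail 0 := by simp [Ctail, ht0]
  have h : (S.map (u M)).sum ≤ S.sum + Ctail 0 + 1 / ((M : ℝ) * ((M : ℝ) - 1)) :=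
    sum_map_u_le (by omega) (fun x hx ↦ (hS x hx).1) (by rwa [ht0])
  linarith

end
end

section
/- Let N ≥ 3 and let M ≥ 3 be an integer divisible by (7^{N+1})!. For 1 ≤ k ≤ N, let I_k be the OOEBP instance consisting of, in order, M items of size 1/7^N, then M items of size 1/7^{N−1}, …, then M items of size 1/7^k. Let θ_k = 1/7^k, μ = 1/7^N, and Θ_k = Σ_{i=k}^N 1/7^i. Then OPT(I_k) = M·Θ_k/(1−μ+θ_k). -/
open scoped BigOperators Classical

namespace OOEBP

noncomputable section

/-- Load of bin `b` under packing `p` of instance `s`. -/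
def binLoad (s : List ℝ) (p : ℕ → ℕ) (b : ℕ) : ℝ :=
  ∑ j ∈ Finset.range s.length, if p j = b then s.getD j 0 else 0

/-- A packing is feasible if each item is placed into a bin whose current
load (total size of earlier items in the same bin) is strictly below 1. -/
def Feasible (s : List ℝ) (p : ℕ → ℕ) : Prop :=
  ∀ i < s.length,
    (∑ j ∈ Finset.range i, if p j = p i then s.getD j 0 else 0) < 1

/-- The cost of a packing: the number of nonempty bins. -/
def cost (s : List ℝ) (p : ℕ → ℕ) : ℕ :=
  ((Finset.range s.length).image p).card

/-- Optimal cost of a feasible packing of `s`. -/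
def OPT (s : List ℝ) : ℕ :=
  sInf {m | ∃ p, Feasible s p ∧ cost s p = m}

/-- Item `i` is the exceeding item of its bin: the bin's total size is at
least 1 and `i` is the item of maximum index in its bin. -/
def IsExceeding (s : List ℝ) (p : ℕ → ℕ) (i : ℕ) : Prop :=
  i < s.length ∧ 1 ≤ binLoad s p (p i) ∧
    ∀ j, i < j → j < s.length → p j ≠ p i
/-- The instance `I_k`: `M` items of size `1/7^N`, then `M` items of size
`1/7^{N−1}`, …, then `M` items of size `1/7^k`, in this order. -/
def instI (M N k : ℕ) : List ℝ :=
  (List.range (N - k + 1)).flatMap fun j => List.replicate M ((1 : ℝ) / 7 ^ (N - j))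

lemma six_geom (n : ℕ) : 6 * ∑ j ∈ Finset.range n, 7^j + 1 = 7^n := by
  induction n with
  | zero => simp
  | succ n ih => rw [Finset.sum_range_succ, pow_succ]; omega

lemma div_eq_iff'' {q b r : ℕ} (hq : 0 < q) : r / q = b ↔ q * b ≤ r ∧ r < q * b + q := by
  constructor
  · rintro rfl
    have h1 := Nat.div_add_mod r q
    have h2 := Nat.mod_lt r hq
    omega
  · rintro ⟨h1, h2⟩
    exact Nat.div_eq_of_lt_le (by rw [mul_comm]; exact h1)
      (by rw [add_mul, one_mul, mul_comm b q]; omega)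

lemma aux_idx (M j r : ℕ) (hM : 0 < M) (hr : r < M) :
    (j * M + r) / M = j ∧ (j * M + r) % M = r := by
  constructor
  · rw [mul_comm, Nat.mul_add_div hM, Nat.div_eq_of_lt hr, add_zero]
  · rw [mul_comm, Nat.mul_add_mod, Nat.mod_eq_of_lt hr]

lemma filter_div_eq_Ico (m q b : ℕ) (hq : 0 < q) :
    (Finset.range m).filter (fun r => r / q = b)
      = Finset.Ico (min (q*b) m) (min (q*b+q) m) := by
  ext r
  simp only [Finset.mem_filter, Finset.mem_range, Finset.mem_Ico, div_eq_iff'' hq]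
  omega

lemma filter_offdiv_eq_Ico (off hi q base b : ℕ) (hq : 0 < q) (hb : base ≤ b) :
    (Finset.Ico off hi).filter (fun r => base + (r - off)/q = b)
      = Finset.Ico (min (off + q*(b-base)) hi) (min (off + q*(b-base) + q) hi) := by
  ext r
  simp only [Finset.mem_filter, Finset.mem_Ico]
  constructor
  · rintro ⟨⟨h1, h2⟩, h3⟩
    have := (div_eq_iff'' hq).mp (show (r - off)/q = b - base by omega)
    omega
  · rintro ⟨h1, h2⟩
    have : (r - off)/q = b - base := (div_eq_iff'' hq).mpr (by omega)
    omega

lemma sum_chunks (f : ℕ → ℝ) (M j : ℕ) :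
    ∑ x ∈ Finset.range (j*M), f x
      = ∑ j' ∈ Finset.range j, ∑ r ∈ Finset.range M, f (j'*M + r) := by
  induction j with
  | zero => simp
  | succ j ih => rw [Nat.succ_mul, Finset.sum_range_add, ih, Finset.sum_range_succ]

lemma sum_ite_le {c m : ℕ} (cond : ℕ → Prop) [DecidablePred cond]
    (hex : ∀ j₁ ∈ Finset.range m, ∀ j₂ ∈ Finset.range m, cond j₁ → cond j₂ → j₁ = j₂) :
    (∑ j ∈ Finset.range m, if cond j then c else 0) ≤ c := by
  rw [← Finset.sum_filter, Finset.sum_const, smul_eq_mul]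
  have h1 : ((Finset.range m).filter cond).card ≤ 1 := by
    refine Finset.card_le_one.mpr ?_
    intro a ha b hb
    rw [Finset.mem_filter] at ha hb
    exact hex a ha.1 b hb.1 ha.2 hb.2
  calc ((Finset.range m).filter cond).card * c ≤ 1 * c := Nat.mul_le_mul_right c h1
    _ = c := one_mul c

lemma length_flatMap_replicate (g : ℕ → ℝ) (m M : ℕ) :
    ((List.range m).flatMap fun j => List.replicate M (g j)).length = m * M := by
  induction m with
  | zero => simp
  | succ m ih =>
      rw [List.range_succ, List.flatMap_append, List.length_append, ih]
      simp [Nat.succ_mul]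

lemma getD_flatMap_replicate (g : ℕ → ℝ) (m M i : ℕ) (hi : i < m * M) :
    ((List.range m).flatMap fun j => List.replicate M (g j)).getD i 0 = g (i / M) := by
  induction m with
  | zero => simp at hi
  | succ m ih =>
      rw [List.range_succ, List.flatMap_append]
      by_cases h : i < m * M
      · rw [List.getD_append _ _ _ _ (by rw [length_flatMap_replicate]; exact h), ih h]
      · have hlen : ((List.range m).flatMap fun j => List.replicate M (g j)).length = m * M :=
          length_flatMap_replicate g m M
        rw [Nat.succ_mul] at hi
        have hge : m * M ≤ i := by omega
        rw [List.getD_append_right _ _ _ _ (by rw [hlen]; exact hge), hlen]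
        have hd : i / M = m := Nat.div_eq_of_lt_le (by omega) (by rw [add_mul, one_mul]; omega)
        rw [hd]
        simp only [List.flatMap_cons, List.flatMap_nil, List.append_nil]
        rw [List.getD_eq_getElem _ _ (by simp; omega)]
        simp

/-- The instance again, with `N = k + n`. -/
lemma instI_length (M k n : ℕ) :
    (instI M (k+n) k).length = (n+1) * M := by
  have : k + n - k + 1 = n + 1 := by omega
  rw [instI, this, length_flatMap_replicate]

lemma instI_getD (M k n i : ℕ) (hi : i < (n+1) * M) :
    (instI M (k+n) k).getD i 0 = (7:ℝ)^(i/M) * ((7:ℝ)^(k+n))⁻¹ := by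
  have h1 : k + n - k + 1 = n + 1 := by omega
  rw [instI, h1, getD_flatMap_replicate _ _ _ _ hi]
  have hdn : i / M ≤ n := by
    rcases Nat.eq_zero_or_pos M with h | h
    · subst h; simp at hi
    · have := (Nat.div_lt_iff_lt_mul h).mpr hi
      omega
  have hpow : (7:ℝ)^(k + n - i/M) * 7^(i/M) = 7^(k+n) := by
    rw [← pow_add]; congr 1; omega
  have hne : (7:ℝ)^(k + n - i/M) ≠ 0 := pow_ne_zero _ (by norm_num)
  have hne2 : (7:ℝ)^(k + n) ≠ 0 := pow_ne_zero _ (by norm_num)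
  field_simp
  linarith [hpow]

/-- The explicit optimal packing. -/
def pack (M K k n : ℕ) : ℕ → ℕ := fun i =>
  if i / M < n then
    if i % M < 6 * (K * (7 * 7 ^ n - 1)) then (i % M) / 6
    else 6 * K * 7 ^ n + K * (7 ^ (i / M) - 1)
      + (i % M - 6 * (K * (7 * 7 ^ n - 1))) / ((7 ^ k - 6) * 7 ^ (n - i / M))
  else
    if i % M < 7 ^ k * (6 * K * 7 ^ n) then (i % M) / 7 ^ k
    else 6 * K * 7 ^ n + (i % M - 7 ^ k * (6 * K * 7 ^ n)) / 6

lemma pack_apply_lt (M K k n j r : ℕ) (hM : 0 < M) (hr : r < M) (hj : j < n) :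
    pack M K k n (j*M + r)
      = if r < 6 * (K * (7 * 7 ^ n - 1)) then r / 6
        else 6 * K * 7 ^ n + K * (7 ^ j - 1)
          + (r - 6 * (K * (7 * 7 ^ n - 1))) / ((7 ^ k - 6) * 7 ^ (n - j)) := by
  obtain ⟨hd, hm⟩ := aux_idx M j r hM hr
  simp only [pack, hd, hm, if_pos hj]

lemma pack_apply_top (M K k n j r : ℕ) (hM : 0 < M) (hr : r < M) (hj : ¬ (j < n)) :
    pack M K k n (j*M + r)
      = if r < 7 ^ k * (6 * K * 7 ^ n) then r / 7 ^ k
        else 6 * K * 7 ^ n + (r - 7 ^ k * (6 * K * 7 ^ n)) / 6 := by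
  obtain ⟨hd, hm⟩ := aux_idx M j r hM hr
  simp only [pack, hd, hm, if_neg hj]


lemma cnt_le (M K k n j b : ℕ) (hM0 : 0 < M) (h7k : 7 ≤ 7 ^ k)
    (hfill : 6 * (K * (7 * 7 ^ n - 1)) + (7 ^ k - 6) * 7 ^ (n - j) * (6 * (K * 7 ^ j)) = M)
    (hj : j < n) :
    ((Finset.range M).filter fun r => pack M K k n (j * M + r) = b).card
      ≤ 6 + if 6*K*7^n + K*(7^j - 1) ≤ b ∧ b < 6*K*7^n + K*(7^(j+1) - 1)
            then (7^k - 6) * 7^(n - j) else 0 := by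
  have hepos : 0 < (7^k - 6) * 7^(n - j) :=
    Nat.mul_pos (by omega) (pow_pos (by norm_num) _)
  have hm6M : 6 * (K * (7 * 7 ^ n - 1)) ≤ M := by omega
  have hsplit : Finset.range M
      = Finset.Ico 0 (6*(K*(7*7^n-1))) ∪ Finset.Ico (6*(K*(7*7^n-1))) M := by
    rw [Finset.range_eq_Ico, Finset.Ico_union_Ico_eq_Ico (Nat.zero_le _) hm6M]
  rw [hsplit, Finset.filter_union]
  refine le_trans (Finset.card_union_le _ _) (add_le_add ?_ ?_)
  · have heq : (Finset.Ico 0 (6*(K*(7*7^n-1)))).filter (fun r => pack M K k n (j*M+r) = b)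
        = (Finset.Ico 0 (6*(K*(7*7^n-1)))).filter (fun r => r / 6 = b) := by
      apply Finset.filter_congr
      intro r hr
      rw [Finset.mem_Ico] at hr
      rw [pack_apply_lt M K k n j r hM0 (by omega) hj, if_pos hr.2]
    rw [heq, ← Finset.range_eq_Ico, filter_div_eq_Ico _ _ _ (by norm_num), Nat.card_Ico]
    omega
  · by_cases hreg : 6*K*7^n + K*(7^j - 1) ≤ b ∧ b < 6*K*7^n + K*(7^(j+1) - 1)
    · rw [if_pos hreg]
      have heq : (Finset.Ico (6*(K*(7*7^n-1))) M).filter (fun r => pack M K k n (j*M+r) = b)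
          = (Finset.Ico (6*(K*(7*7^n-1))) M).filter
              (fun r => (6*K*7^n + K*(7^j - 1)) + (r - 6*(K*(7*7^n-1))) / ((7^k-6)*7^(n-j)) = b) := by
        apply Finset.filter_congr
        intro r hr
        rw [Finset.mem_Ico] at hr
        rw [pack_apply_lt M K k n j r hM0 hr.2 hj, if_neg (not_lt.mpr hr.1), add_assoc]
      rw [heq, filter_offdiv_eq_Ico _ _ _ _ _ hepos hreg.1, Nat.card_Ico]
      omega
    · rw [if_neg hreg]
      have hemp : ∀ r ∈ Finset.Ico (6*(K*(7*7^n-1))) M,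
          ¬ (pack M K k n (j*M+r) = b) := by
        intro r hr h
        rw [Finset.mem_Ico] at hr
        rw [pack_apply_lt M K k n j r hM0 hr.2 hj, if_neg (not_lt.mpr hr.1)] at h
        have hcomm : (7^k-6)*7^(n-j) * (6*(K*7^j)) = 6*(K*7^j) * ((7^k-6)*7^(n-j)) :=
          mul_comm _ _
        have hlt : (r - 6*(K*(7*7^n-1))) / ((7^k-6)*7^(n-j)) < 6*(K*7^j) :=
          (Nat.div_lt_iff_lt_mul hepos).mpr (by omega)
        have h7j : 1 ≤ 7^j := Nat.one_le_pow _ _ (by norm_num)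
        have h7j1 : 1 ≤ 7^(j+1) := Nat.one_le_pow _ _ (by norm_num)
        have e1 : K * (7^j - 1) + K = K * 7^j := by
          calc K * (7^j - 1) + K = K * ((7^j - 1) + 1) := by ring
            _ = K * 7^j := by rw [Nat.sub_add_cancel h7j]
        have e2 : K * (7^(j+1) - 1) + K = K * 7^(j+1) := by
          calc K * (7^(j+1) - 1) + K = K * ((7^(j+1) - 1) + 1) := by ring
            _ = K * 7^(j+1) := by rw [Nat.sub_add_cancel h7j1]
        have e3 : K * 7^(j+1) = 7*(K*7^j) := by rw [pow_succ]; ring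
        generalize hQ : (r - 6*(K*(7*7^n-1))) / ((7^k-6)*7^(n-j)) = Q at h hlt
        omega
      rw [Finset.filter_false_of_mem hemp, Finset.card_empty]

lemma cntT_le (M K k n b : ℕ) (hM0 : 0 < M) (h7k : 7 ≤ 7 ^ k)
    (hTfill : 7^k * (6*K*7^n) + 6 * (K * (7^n - 1)) = M) :
    ((Finset.range M).filter fun r => pack M K k n (n*M + r) = b).card
      ≤ if b < 6*K*7^n then 7^k else 6 := by
  have h7kpos : 0 < 7^k := pow_pos (by norm_num) _
  have hoffM : 7^k * (6*K*7^n) ≤ M := by omega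
  have hsplit : Finset.range M
      = Finset.Ico 0 (7^k * (6*K*7^n)) ∪ Finset.Ico (7^k * (6*K*7^n)) M := by
    rw [Finset.range_eq_Ico, Finset.Ico_union_Ico_eq_Ico (Nat.zero_le _) hoffM]
  rw [hsplit, Finset.filter_union]
  have heq1 : (Finset.Ico 0 (7^k * (6*K*7^n))).filter (fun r => pack M K k n (n*M+r) = b)
      = (Finset.Ico 0 (7^k * (6*K*7^n))).filter (fun r => r / 7^k = b) := by
    apply Finset.filter_congr
    intro r hr
    rw [Finset.mem_Ico] at hr
    rw [pack_apply_top M K k n n r hM0 (by omega) (lt_irrefl n), if_pos hr.2]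
  have heq2 : (Finset.Ico (7^k * (6*K*7^n)) M).filter (fun r => pack M K k n (n*M+r) = b)
      = (Finset.Ico (7^k * (6*K*7^n)) M).filter
          (fun r => 6*K*7^n + (r - 7^k * (6*K*7^n)) / 6 = b) := by
    apply Finset.filter_congr
    intro r hr
    rw [Finset.mem_Ico] at hr
    rw [pack_apply_top M K k n n r hM0 hr.2 (lt_irrefl n), if_neg (not_lt.mpr hr.1)]
  refine le_trans (Finset.card_union_le _ _) ?_
  by_cases hb : b < 6*K*7^n
  · rw [if_pos hb]
    have hc1 : ((Finset.Ico 0 (7^k * (6*K*7^n))).filter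
        (fun r => pack M K k n (n*M+r) = b)).card ≤ 7^k := by
      rw [heq1, ← Finset.range_eq_Ico, filter_div_eq_Ico _ _ _ h7kpos, Nat.card_Ico]
      omega
    have hc2 : ((Finset.Ico (7^k * (6*K*7^n)) M).filter
        (fun r => pack M K k n (n*M+r) = b)).card = 0 := by
      rw [heq2]
      rw [Finset.filter_false_of_mem, Finset.card_empty]
      intro r hr h
      omega
    omega
  · rw [if_neg hb]
    have hc1 : ((Finset.Ico 0 (7^k * (6*K*7^n))).filter
        (fun r => pack M K k n (n*M+r) = b)).card = 0 := by
      rw [heq1]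
      rw [Finset.filter_false_of_mem, Finset.card_empty]
      intro r hr h
      rw [Finset.mem_Ico] at hr
      have : r / 7^k < 6*K*7^n := (Nat.div_lt_iff_lt_mul h7kpos).mpr (by rw [mul_comm]; omega)
      omega
    have hc2 : ((Finset.Ico (7^k * (6*K*7^n)) M).filter
        (fun r => pack M K k n (n*M+r) = b)).card ≤ 6 := by
      rw [heq2, filter_offdiv_eq_Ico _ _ _ _ _ (by norm_num) (by omega), Nat.card_Ico]
      omega
    omega

section Main

variable {M K k n : ℕ}

lemma ctx_facts (hk1 : 1 ≤ k) (hK : 1 ≤ K)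
    (hM : M = 6 * (7^(k+n) + 7^n - 1) * K) :
    7 ≤ 7^k ∧ 0 < M ∧
    (∀ j < n, 6 * (K * (7 * 7 ^ n - 1)) + (7 ^ k - 6) * 7 ^ (n - j) * (6 * (K * 7 ^ j)) = M) ∧
    (7^k * (6*K*7^n) + 6 * (K * (7^n - 1)) = M) := by
  have h7k : 7 ≤ 7^k := by
    calc 7 = 7^1 := (pow_one 7).symm
    _ ≤ 7^k := Nat.pow_le_pow_right (by norm_num) hk1
  have ha : 1 ≤ 7^n := Nat.one_le_pow _ _ (by norm_num)
  have hA : 1 ≤ 7^(k+n) := Nat.one_le_pow _ _ (by norm_num)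
  have h7aA : 7 * 7^n ≤ 7^(k+n) := by
    rw [pow_add]
    exact Nat.mul_le_mul_right _ h7k
  have eC : M = 6*(K*(7^(k+n)+7^n-1)) := by rw [hM]; ring
  have eD : K*(7^(k+n)+7^n-1) + K = K*7^(k+n) + K*7^n := by
    calc K*(7^(k+n)+7^n-1) + K = K*((7^(k+n)+7^n-1) + 1) := by ring
      _ = K*(7^(k+n)+7^n) := by rw [Nat.sub_add_cancel (by omega)]
      _ = K*7^(k+n) + K*7^n := by ring
  have eA : K*(7*7^n - 1) + K = 7*(K*7^n) := by
    calc K*(7*7^n - 1) + K = K*((7*7^n - 1) + 1) := by ring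
      _ = K*(7*7^n) := by rw [Nat.sub_add_cancel (by omega)]
      _ = 7*(K*7^n) := by ring
  have hMpos : 0 < M := by
    rw [eC]
    have : 1 ≤ K*(7^(k+n)+7^n-1) := Nat.one_le_iff_ne_zero.mpr (by
      intro h
      rcases Nat.mul_eq_zero.mp h with h' | h' <;> omega)
    omega
  refine ⟨h7k, hMpos, ?_, ?_⟩
  · intro j hj
    have hsplit7 : (7:ℕ)^(n-j)*7^j = 7^n := by rw [← pow_add]; congr 1; omega
    have hterm : (7^k-6)*7^(n-j)*(6*(K*7^j)) = 6*(K*((7^k-6)*7^n)) := by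
      calc (7^k-6)*7^(n-j)*(6*(K*7^j)) = 6*(K*((7^k-6)*(7^(n-j)*7^j))) := by ring
        _ = 6*(K*((7^k-6)*7^n)) := by rw [hsplit7]
    have hsub : (7^k-6)*7^n = 7^(k+n) - 6*7^n := by
      rw [tsub_mul, ← pow_add]
    have eB : K*(7^(k+n) - 6*7^n) + 6*(K*7^n) = K*7^(k+n) := by
      calc K*(7^(k+n) - 6*7^n) + 6*(K*7^n) = K*((7^(k+n) - 6*7^n) + 6*7^n) := by ring
        _ = K*7^(k+n) := by rw [Nat.sub_add_cancel (by omega)]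
    rw [hterm, hsub, eC]
    omega
  · have hterm : 7^k*(6*K*7^n) = 6*(K*7^(k+n)) := by
      calc 7^k*(6*K*7^n) = 6*(K*(7^k*7^n)) := by ring
        _ = 6*(K*7^(k+n)) := by rw [← pow_add]
    have eE : K*(7^n - 1) + K = K*7^n := by
      calc K*(7^n - 1) + K = K*((7^n - 1) + 1) := by ring
        _ = K*7^n := by rw [Nat.sub_add_cancel ha]
    rw [hterm, eC]
    omega

lemma feasible_pack (hk1 : 1 ≤ k) (hK : 1 ≤ K)
    (hM : M = 6 * (7^(k+n) + 7^n - 1) * K) :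
    Feasible (instI M (k+n) k) (pack M K k n) := by
  obtain ⟨h7k, hM0, hfill, hTfill⟩ := ctx_facts hk1 hK hM
  have h7kpos : (0:ℕ) < 7^k := pow_pos (by norm_num) _
  have ha : 1 ≤ 7^n := Nat.one_le_pow _ _ (by norm_num)
  intro i hi
  rw [instI_length] at hi
  set μ : ℝ := ((7:ℝ)^(k+n))⁻¹ with hμ
  have hμpos : (0:ℝ) < μ := by rw [hμ]; positivity
  set b := pack M K k n i with hb
  set j := i / M with hjdef
  set r := i % M with hrdef
  have hjr : j * M + r = i := by rw [hjdef, hrdef, mul_comm]; exact Nat.div_add_mod i M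
  have hrM : r < M := Nat.mod_lt i hM0
  have hjn : j ≤ n := by
    have := (Nat.div_lt_iff_lt_mul hM0).mpr hi
    omega
  -- counts
  set cnt : ℕ → ℕ := fun j' => ((Finset.range M).filter
      fun r' => pack M K k n (j' * M + r') = b).card with hcntdef
  set pcnt : ℕ := ((Finset.range r).filter
      fun r' => pack M K k n (j * M + r') = b).card with hpcntdef
  -- step 1 : rewrite the sum
  have h1 : ∀ x ∈ Finset.range i,
      (if pack M K k n x = b then (instI M (k+n) k).getD x 0 else 0)
        = (if pack M K k n x = b then (7:ℝ)^(x/M) * μ else 0) := by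
    intro x hx
    rw [Finset.mem_range] at hx
    rw [instI_getD M k n x (by omega)]
  rw [Finset.sum_congr rfl h1, ← hjr, Finset.sum_range_add, sum_chunks]
  -- step 2 : inner sums are counts
  have h2 : ∀ j' ∈ Finset.range j,
      (∑ r' ∈ Finset.range M,
        if pack M K k n (j'*M + r') = b then (7:ℝ)^((j'*M + r')/M) * μ else 0)
      = (cnt j' : ℝ) * ((7:ℝ)^(j') * μ) := by
    intro j' hj'
    have e : ∀ r' ∈ Finset.range M,
        (if pack M K k n (j'*M + r') = b then (7:ℝ)^((j'*M + r')/M) * μ else 0)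
        = (if pack M K k n (j'*M + r') = b then (7:ℝ)^(j') * μ else 0) := by
      intro r' hr'
      rw [(aux_idx M j' r' hM0 (Finset.mem_range.mp hr')).1]
    rw [Finset.sum_congr rfl e, ← Finset.sum_filter, Finset.sum_const, nsmul_eq_mul]
  have h3 : (∑ x ∈ Finset.range r,
      if pack M K k n (j*M + x) = b then (7:ℝ)^((j*M + x)/M) * μ else 0)
      = (pcnt : ℝ) * ((7:ℝ)^j * μ) := by
    have e : ∀ x ∈ Finset.range r,
        (if pack M K k n (j*M + x) = b then (7:ℝ)^((j*M + x)/M) * μ else 0)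
        = (if pack M K k n (j*M + x) = b then (7:ℝ)^j * μ else 0) := by
      intro x hx
      rw [(aux_idx M j x hM0 (by have := Finset.mem_range.mp hx; omega)).1]
    rw [Finset.sum_congr rfl e, ← Finset.sum_filter, Finset.sum_const, nsmul_eq_mul]
  rw [Finset.sum_congr rfl h2, h3]
  -- step 3 : to a single natural number
  have h4 : (∑ j' ∈ Finset.range j, (cnt j' : ℝ) * ((7:ℝ)^(j') * μ))
      + (pcnt : ℝ) * ((7:ℝ)^j * μ)
      = (((∑ j' ∈ Finset.range j, cnt j' * 7^(j')) + pcnt * 7^j : ℕ) : ℝ) * μ := by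
    push_cast
    rw [add_mul, Finset.sum_mul]
    simp [mul_assoc]
  rw [h4]
  -- step 4 : the natural bound
  have hW : (∑ j' ∈ Finset.range j, cnt j' * 7^(j')) + pcnt * 7^j ≤ 7^(k+n) - 1 := by
    have h7aA : 7 * 7^n ≤ 7^(k+n) := by
      rw [pow_add]; exact Nat.mul_le_mul_right _ h7k
    have hkey : ∀ a c : ℕ, a < c →
        (6*K*7^n + K*(7^a - 1) ≤ b ∧ b < 6*K*7^n + K*(7^(a+1) - 1)) →
        (6*K*7^n + K*(7^c - 1) ≤ b ∧ b < 6*K*7^n + K*(7^(c+1) - 1)) → False := by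
      rintro a c hac ⟨_, ha2⟩ ⟨hc1, _⟩
      have hpow : (7:ℕ)^(a+1) ≤ 7^c := Nat.pow_le_pow_right (by norm_num) (by omega)
      have hmul : K*(7^(a+1) - 1) ≤ K*(7^c - 1) := Nat.mul_le_mul_left _ (by omega)
      omega
    have hex : ∀ m : ℕ, ∀ j₁ ∈ Finset.range m, ∀ j₂ ∈ Finset.range m,
        (6*K*7^n + K*(7^(j₁) - 1) ≤ b ∧ b < 6*K*7^n + K*(7^(j₁+1) - 1)) →
        (6*K*7^n + K*(7^(j₂) - 1) ≤ b ∧ b < 6*K*7^n + K*(7^(j₂+1) - 1)) → j₁ = j₂ := by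
      intro m a _ c _ hca hcc
      by_contra hne
      rcases Nat.lt_or_ge a c with h | h
      · exact hkey a c h hca hcc
      · exact hkey c a (by omega) hcc hca
    have hite_le : ∀ m : ℕ,
        (∑ j' ∈ Finset.range m, if 6*K*7^n + K*(7^(j') - 1) ≤ b ∧ b < 6*K*7^n + K*(7^(j'+1) - 1)
            then (7^k-6)*7^n else 0) ≤ (7^k-6)*7^n :=
      fun m => sum_ite_le _ (hex m)
    have hcnt_bd : ∀ j' < n, cnt j' ≤ 6 +
        (if 6*K*7^n + K*(7^(j') - 1) ≤ b ∧ b < 6*K*7^n + K*(7^(j'+1) - 1)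
         then (7^k-6)*7^(n-j') else 0) :=
      fun j' hj' => cnt_le M K k n j' b hM0 h7k (hfill j' hj') hj'
    have hsum_bd : ∀ m ≤ n, (∑ j' ∈ Finset.range m, cnt j' * 7^(j'))
        ≤ (7^n - 1) + ∑ j' ∈ Finset.range m,
            (if 6*K*7^n + K*(7^(j') - 1) ≤ b ∧ b < 6*K*7^n + K*(7^(j'+1) - 1)
             then (7^k-6)*7^n else 0) := by
      intro m hm
      have step1 : (∑ j' ∈ Finset.range m, cnt j' * 7^(j'))
          ≤ ∑ j' ∈ Finset.range m,
              (6 + (if 6*K*7^n + K*(7^(j') - 1) ≤ b ∧ b < 6*K*7^n + K*(7^(j'+1) - 1)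
                    then (7^k-6)*7^(n-j') else 0)) * 7^(j') :=
        Finset.sum_le_sum (fun j' hj' => Nat.mul_le_mul_right _
          (hcnt_bd j' (by have := Finset.mem_range.mp hj'; omega)))
      have step2 : ∀ j' ∈ Finset.range m,
          (6 + (if 6*K*7^n + K*(7^(j') - 1) ≤ b ∧ b < 6*K*7^n + K*(7^(j'+1) - 1)
                then (7^k-6)*7^(n-j') else 0)) * 7^(j')
          = 6*7^(j') + (if 6*K*7^n + K*(7^(j') - 1) ≤ b ∧ b < 6*K*7^n + K*(7^(j'+1) - 1)
                        then (7^k-6)*7^n else 0) := by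
        intro j' hj'
        have hj'm : j' < m := Finset.mem_range.mp hj'
        rw [add_mul, ite_mul, zero_mul]
        congr 1
        by_cases hc : 6*K*7^n + K*(7^(j') - 1) ≤ b ∧ b < 6*K*7^n + K*(7^(j'+1) - 1)
        · rw [if_pos hc, if_pos hc, mul_assoc, ← pow_add]
          congr 2
          omega
        · rw [if_neg hc, if_neg hc]
      rw [Finset.sum_congr rfl step2, Finset.sum_add_distrib] at step1
      have step3 : (∑ j' ∈ Finset.range m, 6*7^(j')) ≤ 7^n - 1 := by
        have hg := six_geom m
        have hpm : (7:ℕ)^m ≤ 7^n := Nat.pow_le_pow_right (by norm_num) hm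
        rw [← Finset.mul_sum]
        omega
      omega
    rcases Nat.lt_or_ge j n with hcase | hcase
    · -- filler item
      have hp : pcnt ≤ cnt j := Finset.card_le_card
        (Finset.filter_subset_filter _ (Finset.range_subset_range.mpr hrM.le))
      have hp7 : pcnt * 7^j ≤ cnt j * 7^j := Nat.mul_le_mul_right _ hp
      have hstep : (∑ j' ∈ Finset.range j, cnt j' * 7^(j')) + cnt j * 7^j
          = ∑ j' ∈ Finset.range (j+1), cnt j' * 7^(j') := (Finset.sum_range_succ _ j).symm
      have h1' := hsum_bd (j+1) (by omega)
      have h2' := hite_le (j+1)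
      have hsub : (7^k-6)*7^n = 7^(k+n) - 6*7^n := by rw [tsub_mul, ← pow_add]
      omega
    · -- top item
      have hjn' : j = n := le_antisymm hjn hcase
      rw [hjn'] at hjr hpcntdef ⊢
      have hbval : b = if r < 7^k*(6*K*7^n) then r / 7^k
          else 6*K*7^n + (r - 7^k*(6*K*7^n))/6 := by
        rw [hb, ← hjr, pack_apply_top M K k n n r hM0 hrM (lt_irrefl n)]
      have h1' := hsum_bd n le_rfl
      by_cases hr1 : r < 7^k*(6*K*7^n)
      · rw [if_pos hr1] at hbval
        have hblt : b < 6*K*7^n := by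
          rw [hbval]
          exact (Nat.div_lt_iff_lt_mul h7kpos).mpr (by rw [mul_comm] at hr1; exact hr1)
        have hite0 : (∑ j' ∈ Finset.range n,
            if 6*K*7^n + K*(7^(j') - 1) ≤ b ∧ b < 6*K*7^n + K*(7^(j'+1) - 1)
            then (7^k-6)*7^n else 0) = 0 :=
          Finset.sum_eq_zero (fun j' _ => by
            rw [if_neg]
            rintro ⟨hc1, -⟩
            omega)
        have hpc : pcnt ≤ 7^k - 1 := by
          have heq : (Finset.range r).filter (fun x => pack M K k n (n*M + x) = b)
              = (Finset.range r).filter (fun x => x / 7^k = b) := by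
            apply Finset.filter_congr
            intro x hx
            have hx' := Finset.mem_range.mp hx
            rw [pack_apply_top M K k n n x hM0 (by omega) (lt_irrefl n), if_pos (by omega)]
          have hdiv := (div_eq_iff'' h7kpos).mp hbval.symm
          rw [hpcntdef, heq, filter_div_eq_Ico _ _ _ h7kpos, Nat.card_Ico]
          omega
        have hpc7 : pcnt * 7^n ≤ (7^k - 1) * 7^n := Nat.mul_le_mul_right _ hpc
        have hsub : (7^k - 1)*7^n = 7^(k+n) - 1*7^n := by rw [tsub_mul, ← pow_add]
        omega
      · rw [if_neg hr1] at hbval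
        have hoffr : 7^k*(6*K*7^n) ≤ r := not_lt.mp hr1
        have hbge : 6*K*7^n ≤ b := by rw [hbval]; omega
        have h2' := hite_le n
        have hpc : pcnt ≤ 5 := by
          have hsplitr : Finset.range r
              = Finset.Ico 0 (7^k*(6*K*7^n)) ∪ Finset.Ico (7^k*(6*K*7^n)) r := by
            rw [Finset.range_eq_Ico, Finset.Ico_union_Ico_eq_Ico (Nat.zero_le _) hoffr]
          rw [hpcntdef, hsplitr, Finset.filter_union]
          refine le_trans (Finset.card_union_le _ _) ?_
          have hpart1 : ((Finset.Ico 0 (7^k*(6*K*7^n))).filter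
              (fun x => pack M K k n (n*M+x) = b)).card = 0 := by
            rw [Finset.filter_false_of_mem, Finset.card_empty]
            intro x hx h
            rw [Finset.mem_Ico] at hx
            rw [pack_apply_top M K k n n x hM0 (by omega) (lt_irrefl n), if_pos hx.2] at h
            have : x / 7^k < 6*K*7^n := (Nat.div_lt_iff_lt_mul h7kpos).mpr
              (by rw [mul_comm]; exact hx.2)
            omega
          have hpart2 : ((Finset.Ico (7^k*(6*K*7^n)) r).filter
              (fun x => pack M K k n (n*M+x) = b)).card ≤ 5 := by
            have heq : (Finset.Ico (7^k*(6*K*7^n)) r).filter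
                (fun x => pack M K k n (n*M+x) = b)
                = (Finset.Ico (7^k*(6*K*7^n)) r).filter
                    (fun x => 6*K*7^n + (x - 7^k*(6*K*7^n))/6 = b) := by
              apply Finset.filter_congr
              intro x hx
              rw [Finset.mem_Ico] at hx
              rw [pack_apply_top M K k n n x hM0 (by omega) (lt_irrefl n),
                if_neg (not_lt.mpr hx.1)]
            have hdiv := (div_eq_iff'' (show (0:ℕ)<6 by norm_num)).mp
              (show (r - 7^k*(6*K*7^n))/6 = b - 6*K*7^n by omega)
            rw [heq, filter_offdiv_eq_Ico _ _ _ _ _ (by norm_num) hbge, Nat.card_Ico]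
            omega
          omega
        have hpc7 : pcnt * 7^n ≤ 5 * 7^n := Nat.mul_le_mul_right _ hpc
        have hsub : (7^k-6)*7^n = 7^(k+n) - 6*7^n := by rw [tsub_mul, ← pow_add]
        omega
  -- step 5 : conclude
  have hcast : ((((∑ j' ∈ Finset.range j, cnt j' * 7^(j')) + pcnt * 7^j : ℕ)) : ℝ)
      ≤ (((7:ℕ)^(k+n) - 1 : ℕ) : ℝ) := Nat.cast_le.mpr hW
  have hlt : (((7:ℕ)^(k+n) - 1 : ℕ) : ℝ) * μ < 1 := by
    have h5 : ((7:ℕ)^(k+n) - 1 : ℕ) < 7^(k+n) := by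
      have : 1 ≤ (7:ℕ)^(k+n) := Nat.one_le_pow _ _ (by norm_num)
      omega
    have h6 : (((7:ℕ)^(k+n) - 1 : ℕ) : ℝ) < ((7:ℝ))^(k+n) := by
      calc (((7:ℕ)^(k+n) - 1 : ℕ) : ℝ) < (((7:ℕ)^(k+n) : ℕ) : ℝ) := Nat.cast_lt.mpr h5
        _ = (7:ℝ)^(k+n) := by push_cast; ring
    calc (((7:ℕ)^(k+n) - 1 : ℕ) : ℝ) * μ < (7:ℝ)^(k+n) * μ :=
          mul_lt_mul_of_pos_right h6 hμpos
      _ = 1 := by rw [hμ]; exact mul_inv_cancel₀ (by positivity)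
  calc ((((∑ j' ∈ Finset.range j, cnt j' * 7^(j')) + pcnt * 7^j : ℕ)) : ℝ) * μ
      ≤ (((7:ℕ)^(k+n) - 1 : ℕ) : ℝ) * μ := mul_le_mul_of_nonneg_right hcast hμpos.le
    _ < 1 := hlt

end Main

lemma cost_pack (hk1 : 1 ≤ k) (hK : 1 ≤ K)
    (hM : M = 6 * (7^(k+n) + 7^n - 1) * K) :
    cost (instI M (k+n) k) (pack M K k n) = K*(7*7^n - 1) := by
  obtain ⟨h7k, hM0, hfill, hTfill⟩ := ctx_facts hk1 hK hM
  have h7kpos : (0:ℕ) < 7^k := pow_pos (by norm_num) _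
  have ha : 1 ≤ 7^n := Nat.one_le_pow _ _ (by norm_num)
  have eX : K*(7*7^n - 1) + K = 7*(K*7^n) := by
    calc K*(7*7^n - 1) + K = K*((7*7^n - 1) + 1) := by ring
      _ = K*(7*7^n) := by rw [Nat.sub_add_cancel (by omega)]
      _ = 7*(K*7^n) := by ring
  have eE : K*(7^n - 1) + K = K*7^n := by
    calc K*(7^n - 1) + K = K*((7^n - 1) + 1) := by ring
      _ = K*7^n := by rw [Nat.sub_add_cancel ha]
  have hlink : 6*K*7^n = 6*(K*7^n) := by ring
  have hKa : K ≤ K*7^n := Nat.le_mul_of_pos_right K (pow_pos (by norm_num) _)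
  rw [cost, instI_length]
  have himg : (Finset.range ((n+1)*M)).image (pack M K k n)
      = Finset.range (K*(7*7^n-1)) := by
    apply Finset.Subset.antisymm
    · intro b hb
      rw [Finset.mem_image] at hb
      obtain ⟨i, hi, hpi⟩ := hb
      rw [Finset.mem_range] at hi ⊢
      subst hpi
      set j := i / M with hjdef
      set r := i % M with hrdef
      have hjr : j * M + r = i := by rw [hjdef, hrdef, mul_comm]; exact Nat.div_add_mod i M
      have hrM : r < M := Nat.mod_lt i hM0
      have hjn : j ≤ n := by
        have := (Nat.div_lt_iff_lt_mul hM0).mpr hi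
        omega
      rcases Nat.lt_or_ge j n with hc | hc
      · rw [← hjr, pack_apply_lt M K k n j r hM0 hrM hc]
        by_cases h1 : r < 6*(K*(7*7^n-1))
        · rw [if_pos h1]
          have : r / 6 < K*(7*7^n-1) :=
            (Nat.div_lt_iff_lt_mul (by norm_num)).mpr (by rw [mul_comm (K*(7*7^n-1)) 6]; omega)
          exact this
        · rw [if_neg h1]
          have hepos : 0 < (7^k - 6) * 7^(n - j) :=
            Nat.mul_pos (by omega) (pow_pos (by norm_num) _)
          have hcomm : (7^k-6)*7^(n-j) * (6*(K*7^j)) = 6*(K*7^j) * ((7^k-6)*7^(n-j)) :=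
            mul_comm _ _
          have hfj := hfill j hc
          have hq : (r - 6*(K*(7*7^n-1))) / ((7^k-6)*7^(n-j)) < 6*(K*7^j) :=
            (Nat.div_lt_iff_lt_mul hepos).mpr (by omega)
          have h7j : 1 ≤ 7^j := Nat.one_le_pow _ _ (by norm_num)
          have h7j1 : 1 ≤ 7^(j+1) := Nat.one_le_pow _ _ (by norm_num)
          have e1 : K * (7^j - 1) + K = K * 7^j := by
            calc K * (7^j - 1) + K = K * ((7^j - 1) + 1) := by ring
              _ = K * 7^j := by rw [Nat.sub_add_cancel h7j]
          have e3 : K * 7^(j+1) = 7*(K*7^j) := by rw [pow_succ]; ring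
          have epow : K * 7^(j+1) ≤ K * 7^n :=
            Nat.mul_le_mul_left _ (Nat.pow_le_pow_right (by norm_num) (by omega))
          generalize hQ : (r - 6*(K*(7*7^n-1))) / ((7^k-6)*7^(n-j)) = Q at hq ⊢
          omega
      · have hc' : j = n := le_antisymm hjn hc
        rw [← hjr, hc', pack_apply_top M K k n n r hM0 hrM (lt_irrefl n)]
        by_cases h1 : r < 7^k*(6*K*7^n)
        · rw [if_pos h1]
          have : r / 7^k < 6*K*7^n :=
            (Nat.div_lt_iff_lt_mul h7kpos).mpr (by rw [mul_comm (6*K*7^n) (7^k)]; omega)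
          omega
        · rw [if_neg h1]
          have hq : (r - 7^k*(6*K*7^n)) / 6 < K*(7^n - 1) := by
            have h0 : r - 7^k*(6*K*7^n) < K*(7^n-1)*6 := by omega
            exact (Nat.div_lt_iff_lt_mul (by norm_num)).mpr h0
          generalize hQ : (r - 7^k*(6*K*7^n)) / 6 = Q at hq ⊢
          omega
    · intro b hb
      rw [Finset.mem_range] at hb
      rw [Finset.mem_image]
      rcases Nat.eq_zero_or_pos n with hn0 | hn0
      · subst hn0
        have hb' : b < 6*K*7^(0:ℕ) := by
          have : (7:ℕ)^(0:ℕ) = 1 := pow_zero 7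
          omega
        refine ⟨7^k * b, ?_, ?_⟩
        · rw [Finset.mem_range]
          have h2 : 7^k * b < 7^k * (6*K*7^(0:ℕ)) := (Nat.mul_lt_mul_left h7kpos).mpr hb'
          have h3 : (7:ℕ)^(0:ℕ) = 1 := pow_zero 7
          omega
        · have hiM : 7^k * b < M := by
            have h2 : 7^k * b < 7^k * (6*K*7^(0:ℕ)) := (Nat.mul_lt_mul_left h7kpos).mpr hb'
            omega
          have hrw : 7^k * b = 0*M + 7^k*b := by ring
          rw [hrw, pack_apply_top M K k 0 0 (7^k*b) hM0 hiM (lt_irrefl 0),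
            if_pos ((Nat.mul_lt_mul_left h7kpos).mpr hb')]
          exact Nat.mul_div_cancel_left b h7kpos
      · refine ⟨6*b, ?_, ?_⟩
        · rw [Finset.mem_range]
          have h2 : 6*b < 6*(K*(7*7^n-1)) := by omega
          have hfj := hfill 0 hn0
          have hM1 : M ≤ (n+1)*M := Nat.le_mul_of_pos_left M (by omega)
          omega
        · have hfj := hfill 0 hn0
          have hiM : 6*b < M := by omega
          have hrw : 6*b = 0*M + 6*b := by ring
          rw [hrw, pack_apply_lt M K k n 0 (6*b) hM0 hiM hn0, if_pos (by omega)]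
          exact Nat.mul_div_cancel_left b (by norm_num)
  rw [himg, Finset.card_range]

lemma lower_bound (hk1 : 1 ≤ k) (hK : 1 ≤ K)
    (hM : M = 6 * (7^(k+n) + 7^n - 1) * K) (p : ℕ → ℕ)
    (hp : Feasible (instI M (k+n) k) p) :
    K*(7*7^n - 1) ≤ cost (instI M (k+n) k) p := by
  obtain ⟨h7k, hM0, hfill, hTfill⟩ := ctx_facts hk1 hK hM
  have ha : (1:ℕ) ≤ 7^n := Nat.one_le_pow _ _ (by norm_num)
  have hA : (1:ℕ) ≤ 7^(k+n) := Nat.one_le_pow _ _ (by norm_num)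
  set s : List ℝ := instI M (k+n) k with hs
  have hlen : s.length = (n+1)*M := instI_length M k n
  set L := (n+1)*M with hL
  set μ : ℝ := ((7:ℝ)^(k+n))⁻¹ with hμ
  have hμpos : (0:ℝ) < μ := by rw [hμ]; positivity
  set G : ℕ := ∑ j' ∈ Finset.range (n+1), 7^j' with hG
  set C : ℕ := 7^(k+n) + 7^n - 1 with hC
  set B := (Finset.range L).image p with hB
  have hgetD : ∀ i < L, s.getD i 0 = (7:ℝ)^(i/M) * μ := by
    intro i hi
    rw [hs, instI_getD M k n i hi, hμ]
  have hswap : ∑ b ∈ B, binLoad s p b = ∑ i ∈ Finset.range L, s.getD i 0 := by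
    calc ∑ b ∈ B, binLoad s p b
        = ∑ b ∈ B, ∑ i ∈ Finset.range L, (if p i = b then s.getD i 0 else 0) := by
          refine Finset.sum_congr rfl (fun b _ => ?_)
          rw [binLoad, hlen]
      _ = ∑ i ∈ Finset.range L, ∑ b ∈ B, (if p i = b then s.getD i 0 else 0) :=
          Finset.sum_comm
      _ = ∑ i ∈ Finset.range L, s.getD i 0 := by
          refine Finset.sum_congr rfl (fun i hi => ?_)
          rw [Finset.sum_ite_eq B (p i) (fun _ => s.getD i 0),
            if_pos (Finset.mem_image_of_mem p hi)]
  have htotal : ∑ i ∈ Finset.range L, s.getD i 0 = ((M * G : ℕ):ℝ) * μ := by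
    rw [Finset.sum_congr rfl (fun i hi => hgetD i (Finset.mem_range.mp hi)), hL,
      sum_chunks (fun t => (7:ℝ)^(t/M)*μ) M (n+1)]
    have h2 : ∀ j' ∈ Finset.range (n+1),
        (∑ r ∈ Finset.range M, (7:ℝ)^((j'*M+r)/M)*μ) = (M:ℝ)*((7:ℝ)^(j')*μ) := by
      intro j' _
      rw [Finset.sum_congr rfl
        (fun r hr => by rw [(aux_idx M j' r hM0 (Finset.mem_range.mp hr)).1]),
        Finset.sum_const, Finset.card_range, nsmul_eq_mul]
    rw [Finset.sum_congr rfl h2, hG]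
    push_cast
    rw [Finset.mul_sum, Finset.sum_mul]
    exact Finset.sum_congr rfl (fun j' _ => by ring)
  have hbin : ∀ b ∈ B, binLoad s p b ≤ ((C:ℕ):ℝ)*μ := by
    intro b hb
    set F := (Finset.range L).filter (fun i => p i = b) with hF
    have hFne : F.Nonempty := by
      rw [hB] at hb
      obtain ⟨i, hi, hpi⟩ := Finset.mem_image.mp hb
      exact ⟨i, Finset.mem_filter.mpr ⟨hi, hpi⟩⟩
    set i₀ := F.max' hFne with hi₀
    have hi₀F : i₀ ∈ F := F.max'_mem hFne
    have hi₀L : i₀ < L := Finset.mem_range.mp (Finset.mem_filter.mp hi₀F).1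
    have hpi₀ : p i₀ = b := (Finset.mem_filter.mp hi₀F).2
    have hload : binLoad s p b = (∑ x ∈ F.erase i₀, s.getD x 0) + s.getD i₀ 0 := by
      rw [binLoad, hlen, ← Finset.sum_filter, ← hF, ← Finset.sum_erase_add F _ hi₀F]
    have hfilter_eq : ∑ x ∈ (Finset.range i₀).filter (fun x => p x = b), s.getD x 0
        = ((∑ x ∈ (Finset.range i₀).filter (fun x => p x = b), 7^(x/M) : ℕ):ℝ) * μ := by
      rw [Finset.sum_congr rfl (fun x hx => hgetD x (by
        have := Finset.mem_range.mp (Finset.mem_filter.mp hx).1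
        omega))]
      push_cast
      rw [Finset.sum_mul]
    have hfeas := hp i₀ (by rw [hlen]; exact hi₀L)
    rw [hpi₀] at hfeas
    have hprefix_eq : (∑ x ∈ Finset.range i₀, if p x = b then s.getD x 0 else 0)
        = ((∑ x ∈ (Finset.range i₀).filter (fun x => p x = b), 7^(x/M) : ℕ):ℝ) * μ := by
      rw [← Finset.sum_filter, hfilter_eq]
    have hone : (1:ℝ) = (((7:ℕ)^(k+n) : ℕ):ℝ) * μ := by
      push_cast
      rw [hμ, mul_inv_cancel₀ (by positivity)]
    rw [hprefix_eq, hone] at hfeas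
    have hWlt : (∑ x ∈ (Finset.range i₀).filter (fun x => p x = b), 7^(x/M) : ℕ)
        < 7^(k+n) := Nat.cast_lt.mp (lt_of_mul_lt_mul_right hfeas hμpos.le)
    have herase : (∑ x ∈ F.erase i₀, s.getD x 0)
        ≤ ∑ x ∈ (Finset.range i₀).filter (fun x => p x = b), s.getD x 0 := by
      refine Finset.sum_le_sum_of_subset_of_nonneg ?_ ?_
      · intro x hx
        obtain ⟨hxne, hxF⟩ := Finset.mem_erase.mp hx
        obtain ⟨hxL, hxp⟩ := Finset.mem_filter.mp hxF
        have hxle : x ≤ i₀ := F.le_max' x hxF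
        exact Finset.mem_filter.mpr ⟨Finset.mem_range.mpr (by omega), hxp⟩
      · intro x hx _
        have hxL : x < L := by
          have := Finset.mem_range.mp (Finset.mem_filter.mp hx).1
          omega
        rw [hgetD x hxL]
        positivity
    have herase2 : ∑ x ∈ (Finset.range i₀).filter (fun x => p x = b), s.getD x 0
        ≤ (((7:ℕ)^(k+n) - 1 : ℕ):ℝ) * μ := by
      rw [hfilter_eq]
      have h5 : (∑ x ∈ (Finset.range i₀).filter (fun x => p x = b), 7^(x/M) : ℕ)
          ≤ 7^(k+n) - 1 := by omega
      exact mul_le_mul_of_nonneg_right (Nat.cast_le.mpr h5) hμpos.le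
    have hsz : s.getD i₀ 0 ≤ (7:ℝ)^n * μ := by
      rw [hgetD i₀ hi₀L]
      have hdn : i₀/M ≤ n := by
        have h6 : i₀ < (n+1)*M := hi₀L
        have := (Nat.div_lt_iff_lt_mul hM0).mpr h6
        omega
      exact mul_le_mul_of_nonneg_right
        (pow_le_pow_right₀ (by norm_num) hdn) hμpos.le
    calc binLoad s p b = (∑ x ∈ F.erase i₀, s.getD x 0) + s.getD i₀ 0 := hload
      _ ≤ (((7:ℕ)^(k+n) - 1 : ℕ):ℝ) * μ + (7:ℝ)^n * μ :=
          add_le_add (herase.trans herase2) hsz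
      _ = ((C:ℕ):ℝ)*μ := by
          rw [hC]
          push_cast [Nat.cast_sub hA, Nat.cast_sub (show 1 ≤ 7^(k+n) + 7^n by omega)]
          ring
  have hsum_le : ∑ b ∈ B, binLoad s p b ≤ (B.card : ℝ) * (((C:ℕ):ℝ)*μ) := by
    calc ∑ b ∈ B, binLoad s p b ≤ ∑ b ∈ B, ((C:ℕ):ℝ)*μ := Finset.sum_le_sum hbin
      _ = (B.card : ℝ) * (((C:ℕ):ℝ)*μ) := by rw [Finset.sum_const, nsmul_eq_mul]
  have hMG : M * G = (K*(7*7^n - 1)) * C := by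
    have h6G : 7*7^n - 1 = 6*G := by
      have h1 := six_geom (n+1)
      have h2 : (7:ℕ)^(n+1) = 7*7^n := by rw [pow_succ]; ring
      rw [hG]
      omega
    rw [hM, h6G, hC]
    ring
  have hkey : ((K*(7*7^n - 1) : ℕ):ℝ) * (((C:ℕ):ℝ)*μ) ≤ (B.card : ℝ) * (((C:ℕ):ℝ)*μ) := by
    calc ((K*(7*7^n - 1) : ℕ):ℝ) * (((C:ℕ):ℝ)*μ) = ((M*G:ℕ):ℝ) * μ := by
          push_cast [hMG]
          ring
      _ = ∑ b ∈ B, binLoad s p b := by rw [hswap, htotal]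
      _ ≤ _ := hsum_le
  have hCμpos : (0:ℝ) < ((C:ℕ):ℝ)*μ := by
    have h7 : 0 < C := by rw [hC]; omega
    have h8 : (0:ℝ) < ((C:ℕ):ℝ) := by exact_mod_cast h7
    positivity
  have hfin : ((K*(7*7^n - 1) : ℕ):ℝ) ≤ (B.card : ℝ) :=
    le_of_mul_le_mul_right hkey hCμpos
  have hfin' : K*(7*7^n - 1) ≤ B.card := by exact_mod_cast hfin
  rw [cost, hlen]
  exact hfin'

lemma opt_eq (hk1 : 1 ≤ k) (hK : 1 ≤ K)
    (hM : M = 6 * (7^(k+n) + 7^n - 1) * K) :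
    OPT (instI M (k+n) k) = K*(7*7^n - 1) := by
  have hfe := feasible_pack hk1 hK hM
  have hco := cost_pack hk1 hK hM
  have hne : {m | ∃ p, Feasible (instI M (k+n) k) p ∧ cost (instI M (k+n) k) p = m}.Nonempty :=
    ⟨K*(7*7^n-1), pack M K k n, hfe, hco⟩
  have hub : OPT (instI M (k+n) k) ≤ K*(7*7^n-1) :=
    Nat.sInf_le ⟨pack M K k n, hfe, hco⟩
  obtain ⟨p0, hp0, hc0⟩ := Nat.sInf_mem hne
  have hlb := lower_bound hk1 hK hM p0 hp0
  rw [hc0] at hlb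
  exact le_antisymm hub hlb


/-- `OPT(I_k) = M·Θ_k/(1−μ+θ_k)` where `θ_k = 1/7^k`,
`μ = 1/7^N` and `Θ_k = Σ_{i=k}^N 1/7^i`. -/
theorem stmt14 (N M k : ℕ) (hN : 3 ≤ N) (hM : 3 ≤ M)
    (hdiv : Nat.factorial (7 ^ (N + 1)) ∣ M) (hk1 : 1 ≤ k) (hkN : k ≤ N) :
    (OPT (instI M N k) : ℝ) =
      (M : ℝ) * (∑ i ∈ Finset.Icc k N, (1 : ℝ) / 7 ^ i) /
        (1 - 1 / 7 ^ N + 1 / 7 ^ k) := by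
  set n := N - k with hn
  have hkn : k + n = N := by omega
  -- divisibility: 6*C divides M
  have hpow1 : (7:ℕ)^n ≤ 7^(N-1) := Nat.pow_le_pow_right (by norm_num) (by omega)
  have hpowN : (7:ℕ)^N = 7*7^(N-1) := by
    have h0 : N - 1 + 1 = N := by omega
    calc (7:ℕ)^N = 7^(N-1+1) := by rw [h0]
      _ = 7*7^(N-1) := by rw [pow_succ]; ring
  have hpowN1 : (7:ℕ)^(N+1) = 49*7^(N-1) := by
    have h0 : N - 1 + 2 = N + 1 := by omega
    calc (7:ℕ)^(N+1) = 7^(N-1+2) := by rw [h0]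
      _ = 49*7^(N-1) := by rw [pow_add]; ring
  have h1N : (1:ℕ) ≤ 7^(N-1) := Nat.one_le_pow _ _ (by norm_num)
  have h1n : (1:ℕ) ≤ 7^n := Nat.one_le_pow _ _ (by norm_num)
  have hCle : 6 * (7^N + 7^n - 1) ≤ 7^(N+1) := by omega
  have hCpos : 0 < 6*(7^N + 7^n - 1) := by omega
  have hdvd : 6 * (7^N + 7^n - 1) ∣ M :=
    dvd_trans (Nat.dvd_factorial hCpos hCle) hdiv
  set K := M / (6 * (7^N + 7^n - 1)) with hKdef
  have hMK : M = 6 * (7^N + 7^n - 1) * K := (Nat.mul_div_cancel' hdvd).symm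
  have hK1 : 1 ≤ K := by
    rcases Nat.eq_zero_or_pos K with h | h
    · rw [h, mul_zero] at hMK; omega
    · exact h
  have hopt : OPT (instI M N k) = K*(7*7^n - 1) := by
    have h := opt_eq (M := M) (K := K) (k := k) (n := n) hk1 hK1
      (by rw [hkn]; exact hMK)
    rw [hkn] at h
    exact h
  rw [hopt]
  -- now the real arithmetic
  set G : ℕ := ∑ j' ∈ Finset.range (n+1), 7^j' with hG
  have h7Nne : ((7:ℝ)^N) ≠ 0 := by positivity
  have hGcast : ((G:ℕ):ℝ) = ∑ i ∈ Finset.range (n+1), (7:ℝ)^i := by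
    rw [hG]; push_cast; rfl
  have hTheta : (∑ i ∈ Finset.Icc k N, (1:ℝ)/7^i) = (G:ℝ) * ((7:ℝ)^N)⁻¹ := by
    have h1 : Finset.Icc k N = Finset.Ico k (N+1) := by rw [Finset.Ico_add_one_right_eq_Icc]
    rw [h1, Finset.sum_Ico_eq_sum_range, show N+1-k = n+1 by omega]
    have h3 : ∀ i ∈ Finset.range (n+1), (1:ℝ)/7^(k+i) = (7:ℝ)^(n-i) * ((7:ℝ)^N)⁻¹ := by
      intro i hi
      have hiN : (k+i) + (n-i) = N := by
        have := Finset.mem_range.mp hi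
        omega
      rw [show (7:ℝ)^(n-i) * ((7:ℝ)^N)⁻¹ = 7^(n-i) / 7^N from (div_eq_mul_inv _ _).symm,
        div_eq_div_iff (by positivity) (by positivity), one_mul, ← pow_add]
      congr 1
      · omega
    rw [Finset.sum_congr rfl h3, ← Finset.sum_mul]
    congr 1
    have h5 : ∀ i ∈ Finset.range (n+1), (7:ℝ)^(n - i) = (7:ℝ)^(n+1-1-i) := by
      intro i _
      have h6 : n + 1 - 1 - i = n - i := by omega
      rw [h6]
    rw [Finset.sum_congr rfl h5, Finset.sum_range_reflect (fun i => (7:ℝ)^i) (n+1)]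
    exact hGcast.symm
  have hCcast : (((7^N + 7^n - 1 : ℕ)):ℝ) = (7:ℝ)^N + 7^n - 1 := by
    push_cast [Nat.cast_sub (show (1:ℕ) ≤ 7^N + 7^n by omega)]
    ring
  have hkn7 : (7:ℝ)^k * 7^n = 7^N := by rw [← pow_add, hkn]
  have hden : (1:ℝ) - 1/7^N + 1/7^k = (((7^N + 7^n - 1 : ℕ)):ℝ) * ((7:ℝ)^N)⁻¹ := by
    have e1 : (1:ℝ)/7^k = 7^n * (7^N)⁻¹ := by
      rw [show (7:ℝ)^n * ((7:ℝ)^N)⁻¹ = 7^n / 7^N from (div_eq_mul_inv _ _).symm,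
        div_eq_div_iff (by positivity) (by positivity), one_mul, mul_comm]
      exact hkn7.symm
    have e3 : ((7:ℝ)^N + 7^n - 1) * ((7:ℝ)^N)⁻¹ = 1 + 7^n*((7:ℝ)^N)⁻¹ - (7^N)⁻¹ := by
      rw [sub_mul, add_mul, mul_inv_cancel₀ h7Nne, one_mul]
    rw [hCcast, e3, e1, one_div]
    ring
  rw [hTheta, hden]
  have hMGnat : (K*(7*7^n-1)) * (7^N + 7^n - 1) = M * G := by
    have h6G : 7*7^n - 1 = 6*G := by
      have h1 := six_geom (n+1)
      have h2 : (7:ℕ)^(n+1) = 7*7^n := by rw [pow_succ]; ring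
      rw [hG]
      omega
    rw [h6G, hMK]
    ring
  have hdenpos : (0:ℝ) < (((7^N + 7^n - 1 : ℕ)):ℝ) * ((7:ℝ)^N)⁻¹ := by
    have h7 : (0:ℕ) < 7^N + 7^n - 1 := by omega
    have h8 : (0:ℝ) < (((7^N + 7^n - 1 : ℕ)):ℝ) := by exact_mod_cast h7
    positivity
  rw [eq_div_iff (ne_of_gt hdenpos)]
  calc ((K*(7*7^n - 1) : ℕ):ℝ) * ((((7^N + 7^n - 1 : ℕ)):ℝ) * ((7:ℝ)^N)⁻¹)
      = (((K*(7*7^n-1)) * (7^N + 7^n - 1) : ℕ):ℝ) * ((7:ℝ)^N)⁻¹ := by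
        push_cast
        ring
    _ = ((M * G : ℕ):ℝ) * ((7:ℝ)^N)⁻¹ := by rw [hMGnat]
    _ = (M:ℝ) * ((G:ℝ) * ((7:ℝ)^N)⁻¹) := by
        push_cast
        ring


end

end OOEBP
end

section
/- Let N ≥ 3 and let M ≥ 3 be an integer divisible by (7^{N+1})!. Let I_1 be the OOEBP instance consisting of, in order, M items of size 1/7^i for i = N, N−1, …, 1. Let J_3 be I_1 followed by M items of size 1/3; J_2 be J_3 followed by M items of size 1/2; J_22 be J_3 followed by 2M items of size 1/2; and J_1 be J_2 followed by M items of size 1. Then OPT(J_3) ≤ 3M/8, OPT(J_2) ≤ 2M/3, OPT(J_22) ≤ M, and OPT(J_1) ≤ M. -/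
open scoped BigOperators Classical

namespace OOEBP

noncomputable section

/-! Let `S = ∑_{i=1}^N 7^{-i} < 1/6` be the total size of one item of each small size. Since
`24 ∣ M`, every size class can be cut into groups of `P` consecutive items (`P = 8` for `J_3`,
`P = 3` for `J_2`, `P = 1` otherwise) whose copies are dealt out by a fixed row pattern to `R`
kinds of bins, one bin of each kind per group, giving `R * M / P` bins. For `J_3` two kinds get two
copies of every small size and three thirds, the third kind four copies and two thirds; for `J_2`
one kind gets one copy, a third and two halves, the other two copies, two thirds and a half; for
`J_22` and `J_1` every bin gets one item of each size. The load of a bin before its last item is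
then `4S + 1/3`, `2S + 2/3` or `S + 5/6`, all below `1`, and earlier items see no more.
-/

open Finset

lemma sum_range_mul {β : Type*} [AddCommMonoid β] (f : ℕ → β) (m n : ℕ) :
    ∑ i ∈ range (m * n), f i = ∑ a ∈ range m, ∑ b ∈ range n, f (a * n + b) := by
  induction m with
  | zero => simp
  | succ m ih => rw [Nat.succ_mul, sum_range_add, ih, sum_range_succ]

lemma card_filter_getD_eq_count {α : Type*} [DecidableEq α] (l : List α) (d c : α) :
    #{u ∈ range l.length | l.getD u d = c} = l.count c := by
  induction l with
  | nil => simp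
  | cons x l ih =>
    rw [List.length_cons, card_filter, sum_range_succ', ← card_filter]
    simp only [List.getD_cons_succ, List.getD_cons_zero, ih, List.count_cons, beq_iff_eq]

section Blocks

variable {α : Type*}

def blocks (M : ℕ) (vs : List α) : List α := vs.flatMap (List.replicate M)

lemma blocks_append_singleton (M : ℕ) (vs : List α) (x : α) :
    blocks M (vs ++ [x]) = blocks M vs ++ List.replicate M x := by
  simp [blocks]

lemma length_blocks (M : ℕ) (vs : List α) : (blocks M vs).length = vs.length * M := by
  induction vs with
  | nil => simp [blocks]
  | cons v vs ih => simp_all [blocks, Nat.succ_mul, Nat.add_comm]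

lemma getD_blocks {M : ℕ} (hM : 0 < M) (vs : List α) (d : α) (i : ℕ) :
    (blocks M vs).getD i d = vs.getD (i / M) d := by
  induction vs generalizing i with
  | nil => simp [blocks]
  | cons v vs ih =>
    rcases lt_or_ge i M with h | h
    · rw [blocks, List.flatMap_cons, List.getD_append _ _ _ _ (by simpa using h)]
      simp [h, Nat.div_eq_of_lt h]
    · obtain ⟨i, rfl⟩ := Nat.exists_eq_add_of_le h
      rw [Nat.add_div_left _ hM, List.getD_cons_succ, ← ih, blocks, List.flatMap_cons,
        List.getD_append_right _ _ _ _ (by simp)]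
      simp [blocks]

end Blocks

lemma exists_block_index {n P H i : ℕ} (hi : i < n * (P * H)) :
    ∃ k < n, ∃ t < H, ∃ u < P, i = (k * H + t) * P + u := by
  have hP : 0 < P := Nat.pos_of_ne_zero (by rintro rfl; simp at hi)
  have hH : 0 < H := Nat.pos_of_ne_zero (by rintro rfl; simp at hi)
  refine ⟨i / P / H, ?_, i / P % H, Nat.mod_lt _ hH, i % P, Nat.mod_lt _ hP, ?_⟩
  · rw [Nat.div_div_eq_div_mul, Nat.div_lt_iff_lt_mul (Nat.mul_pos hP hH)]
    exact hi
  · rw [Nat.div_add_mod' (i / P) H, Nat.div_add_mod' i P]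

lemma mul_add_div_of_lt {q u P : ℕ} (hu : u < P) : (q * P + u) / P = q := by
  rw [Nat.add_comm, Nat.add_mul_div_right _ _ (by omega), Nat.div_eq_of_lt hu, Nat.zero_add]

-- Item `i` is copy `u = i % P` of group `q = i / P`, the `(q % H)`-th group of block `k = q / H`;
-- it goes to the `(q % H)`-th bin of class `(rows k)[u]`, class `c` being the bins `c * H + t`,
-- `t < H`.
def blockPacking (P H : ℕ) (rows : ℕ → List ℕ) (i : ℕ) : ℕ :=
  (rows (i / P / H)).getD (i % P) 0 * H + i / P % H

def patternLoad (vs : List ℝ) (rows : ℕ → List ℕ) (c : ℕ) : ℝ :=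
  ∑ k ∈ range vs.length, (rows k).count c * vs.getD k 0

section BlockPacking

variable {P H : ℕ} {rows : ℕ → List ℕ}

lemma blockPacking_apply {k t u : ℕ} (ht : t < H) (hu : u < P) :
    blockPacking P H rows ((k * H + t) * P + u) = (rows k).getD u 0 * H + t := by
  rw [blockPacking, mul_add_div_of_lt hu, Nat.mul_add_mod_of_lt hu, mul_add_div_of_lt ht,
    Nat.mul_add_mod_of_lt ht]

lemma getD_blocks_index (vs : List ℝ) {k t u : ℕ} (ht : t < H) (hu : u < P) :
    (blocks (P * H) vs).getD ((k * H + t) * P + u) 0 = vs.getD k 0 := by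
  rw [getD_blocks (Nat.mul_pos (by omega) (by omega)), ← Nat.div_div_eq_div_mul,
    mul_add_div_of_lt hu, mul_add_div_of_lt ht]

lemma mul_add_eq_mul_add_iff {a b t t' H : ℕ} (ht : t < H) (ht' : t' < H) :
    a * H + t' = b * H + t ↔ a = b ∧ t' = t := by
  constructor
  · intro h
    have hab : a = b := by
      rw [← mul_add_div_of_lt (q := a) ht', h, mul_add_div_of_lt ht]
    subst hab
    exact ⟨rfl, by omega⟩
  · rintro ⟨rfl, rfl⟩
    rfl

lemma binLoad_blockPacking (vs : List ℝ) (hrows : ∀ k, (rows k).length = P) (c : ℕ) {t : ℕ}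
    (ht : t < H) :
    binLoad (blocks (P * H) vs) (blockPacking P H rows) (c * H + t) = patternLoad vs rows c := by
  have hterm : ∀ k, ∀ t' < H, ∀ u < P,
      (if blockPacking P H rows ((k * H + t') * P + u) = c * H + t then
        (blocks (P * H) vs).getD ((k * H + t') * P + u) 0 else 0)
        = if t' = t then (if (rows k).getD u 0 = c then vs.getD k 0 else 0) else 0 := by
    intro k t' ht' u hu
    simp only [blockPacking_apply ht' hu, getD_blocks_index vs ht' hu,
      (mul_add_eq_mul_add_iff ht ht').trans and_comm, ite_and]
  rw [binLoad, patternLoad, length_blocks, show vs.length * (P * H) = vs.length * H * P by ring,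
    sum_range_mul, sum_range_mul]
  refine sum_congr rfl fun k _ => ?_
  rw [sum_congr rfl fun t' ht' => sum_congr rfl fun u hu =>
      hterm k t' (mem_range.1 ht') u (mem_range.1 hu), sum_comm]
  simp only [sum_ite_eq', mem_range, ht, if_true]
  rw [← sum_filter, sum_const, nsmul_eq_mul, ← hrows k, card_filter_getD_eq_count]

end BlockPacking

lemma OPT_le_of_feasible {s : List ℝ} {p : ℕ → ℕ} {B : ℕ} (hp : Feasible s p)
    (hB : ∀ i < s.length, p i < B) : OPT s ≤ B :=
  calc OPT s ≤ cost s p := Nat.sInf_le ⟨p, hp, rfl⟩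
    _ ≤ #(range B) := card_le_card fun b hb => by
        obtain ⟨i, hi, rfl⟩ := mem_image.1 hb
        exact mem_range.2 (hB i (mem_range.1 hi))
    _ = B := card_range B

lemma feasible_of_exists_later {s : List ℝ} {p : ℕ → ℕ} (hs : ∀ x ∈ s, 0 ≤ x)
    (h : ∀ i < s.length, ∃ j, i ≤ j ∧ j < s.length ∧ p j = p i ∧
      binLoad s p (p i) < 1 + s.getD j 0) :
    Feasible s p := by
  intro i hi
  obtain ⟨j, hij, hjs, hpj, hload⟩ := h i hi
  have hnn : ∀ l, 0 ≤ if p l = p i then s.getD l 0 else 0 := fun l => by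
    split_ifs
    · rcases lt_or_ge l s.length with hl | hl
      · rw [List.getD_eq_getElem _ _ hl]; exact hs _ (List.getElem_mem hl)
      · rw [List.getD_eq_default _ _ hl]
    · exact le_rfl
  have hlater : s.getD j 0 ≤ ∑ l ∈ Ico i s.length, if p l = p i then s.getD l 0 else 0 := by
    simpa [hpj] using single_le_sum (fun l _ => hnn l) (mem_Ico.2 ⟨hij, hjs⟩)
  rw [binLoad, ← sum_range_add_sum_Ico _ hi.le] at hload
  linarith

theorem OPT_blocks_le (vs : List ℝ) (rows : ℕ → List ℕ) {L P H R : ℕ}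
    (hL : vs.length = L + 1) (hvs : ∀ x ∈ vs, 0 ≤ x) (hrows : ∀ k, (rows k).length = P)
    (hR : ∀ k, ∀ c ∈ rows k, c < R) (hcover : ∀ c < R, c ∈ rows L)
    (hload : ∀ c < R, patternLoad vs rows c < 1 + vs.getD L 0) :
    OPT (blocks (P * H) vs) ≤ R * H := by
  have hlen : (blocks (P * H) vs).length = (L + 1) * (P * H) := by rw [length_blocks, hL]
  have hclass : ∀ k, ∀ u < P, (rows k).getD u 0 < R := fun k u hu => by
    rw [← hrows k] at hu
    exact hR k _ (List.getD_eq_getElem _ _ hu ▸ List.getElem_mem hu)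
  have hblocks : ∀ x ∈ blocks (P * H) vs, 0 ≤ x := fun x hx => by
    obtain ⟨v, hv, hx⟩ := List.mem_flatMap.1 hx
    exact List.eq_of_mem_replicate hx ▸ hvs v hv
  apply OPT_le_of_feasible (p := blockPacking P H rows)
  · refine feasible_of_exists_later hblocks fun i hi => ?_
    obtain ⟨k, hk, t, ht, u, hu, rfl⟩ := exists_block_index (hlen ▸ hi)
    set c := (rows k).getD u 0
    -- the last item of the bin of `i` is the last copy of class `c` in group `t` of the last block
    have hne : {u' ∈ range P | (rows L).getD u' 0 = c}.Nonempty := by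
      obtain ⟨u', hu', hc⟩ := List.getElem_of_mem (hcover c (hclass k u hu))
      exact ⟨u', mem_filter.2 ⟨mem_range.2 (hrows L ▸ hu'), by rwa [List.getD_eq_getElem]⟩⟩
    obtain ⟨e, he_mem, he_max⟩ : ∃ e ∈ {u' ∈ range P | (rows L).getD u' 0 = c},
        ∀ u' ∈ {u' ∈ range P | (rows L).getD u' 0 = c}, u' ≤ e :=
      ⟨_, max'_mem _ hne, fun _ => le_max' _ _⟩
    obtain ⟨he, hce⟩ := mem_filter.1 he_mem
    rw [mem_range] at he
    refine ⟨(L * H + t) * P + e, ?_, ?_, ?_, ?_⟩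
    · rcases (Nat.lt_succ_iff.1 hk).lt_or_eq with hkL | hkL
      · have hgroup : k * H + t + 1 ≤ L * H + t := by nlinarith
        nlinarith
      · have hue : u ≤ e := he_max u (mem_filter.2 ⟨mem_range.2 hu, by rw [← hkL]⟩)
        rw [hkL]
        omega
    · rw [hlen]
      nlinarith [Nat.mul_le_mul_right P (show L * H + t + 1 ≤ L * H + H by omega)]
    · rw [blockPacking_apply ht he, blockPacking_apply ht hu, hce]
    · rw [blockPacking_apply ht hu, binLoad_blockPacking vs hrows c ht,
        getD_blocks_index vs ht he]
      exact hload c (hclass k u hu)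
  · intro i hi
    obtain ⟨k, -, t, ht, u, hu, rfl⟩ := exists_block_index (hlen ▸ hi)
    rw [blockPacking_apply ht hu]
    nlinarith [hclass k u hu]

def smallSizes (N : ℕ) : List ℝ := (List.range N).map fun j => 1 / 7 ^ (N - j)

lemma instI_one_eq_blocks (M : ℕ) {N : ℕ} (hN : 1 ≤ N) :
    instI M N 1 = blocks M (smallSizes N) := by
  rw [instI, blocks, smallSizes, List.flatMap_map, Nat.sub_add_cancel hN]

lemma length_smallSizes_append (N : ℕ) (big : List ℝ) :
    (smallSizes N ++ big).length = N + big.length := by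
  simp [smallSizes]

lemma smallSizes_append_nonneg (N : ℕ) {big : List ℝ} (hbig : ∀ x ∈ big, 0 ≤ x) :
    ∀ x ∈ smallSizes N ++ big, 0 ≤ x := by
  simp only [List.mem_append, smallSizes, List.mem_map]
  rintro x (⟨j, -, rfl⟩ | hx)
  · positivity
  · exact hbig x hx

lemma getD_smallSizes_append_of_le {N k : ℕ} (big : List ℝ) (hk : N ≤ k) :
    (smallSizes N ++ big).getD k 0 = big.getD (k - N) 0 := by
  rw [List.getD_append_right _ _ _ _ (by simpa [smallSizes] using hk)]
  simp [smallSizes]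

lemma sum_inv_seven_pow_lt (N : ℕ) : ∑ k ∈ range N, (1 : ℝ) / 7 ^ (N - k) < 1 / 6 := by
  have hreflect :
      ∑ k ∈ range N, (1 : ℝ) / 7 ^ (N - k) = 1 / 7 * ∑ i ∈ range N, (1 / 7 : ℝ) ^ i := by
    rw [← sum_range_reflect, mul_sum]
    refine sum_congr rfl fun i hi => ?_
    rw [show N - (N - 1 - i) = i + 1 by have := mem_range.1 hi; omega, pow_succ, one_div_pow]
    ring
  have hpos : 0 < (1 / 7 : ℝ) ^ N := by positivity
  rw [hreflect, geom_sum_eq (by norm_num), show (1 / 7 : ℝ) - 1 = -(6 / 7) by norm_num]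
  field_simp
  linarith

lemma patternLoad_smallSizes_append (N : ℕ) (big : List ℝ) {rows : ℕ → List ℕ} {a : List ℕ}
    (ha : ∀ k < N, rows k = a) (c : ℕ) :
    patternLoad (smallSizes N ++ big) rows c
      = a.count c * ∑ k ∈ range N, (1 : ℝ) / 7 ^ (N - k)
        + ∑ m ∈ range big.length, (rows (N + m)).count c * big.getD m 0 := by
  rw [patternLoad, length_smallSizes_append, sum_range_add, mul_sum]
  congr 1
  · refine sum_congr rfl fun k hk => ?_
    rw [mem_range] at hk
    rw [ha k hk, List.getD_append _ _ _ _ (by simpa [smallSizes] using hk)]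
    simp [smallSizes, List.getD_eq_getElem?_getD, hk]
  · simp only [getD_smallSizes_append_of_le big (Nat.le_add_right N _), Nat.add_sub_cancel_left]

lemma OPT_J3_le (N H : ℕ) :
    OPT (blocks (8 * H) (smallSizes N) ++ List.replicate (8 * H) (1 / 3)) ≤ 3 * H := by
  rw [← blocks_append_singleton]
  have hS := sum_inv_seven_pow_lt N
  have hS0 : 0 ≤ ∑ k ∈ range N, (1 : ℝ) / 7 ^ (N - k) := sum_nonneg fun _ _ => by positivity
  apply OPT_blocks_le _
    (fun k => if k < N then [0, 0, 1, 1, 2, 2, 2, 2] else [0, 0, 0, 1, 1, 1, 2, 2]) (L := N)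
    (length_smallSizes_append N _) (smallSizes_append_nonneg N (by norm_num))
  · intro k; split_ifs <;> rfl
  · intro k; split_ifs <;> decide
  · intro c hc; simp only [lt_irrefl, if_false]; interval_cases c <;> decide
  · intro c hc
    rw [patternLoad_smallSizes_append N _ (fun k hk => if_pos hk),
      getD_smallSizes_append_of_le _ le_rfl]
    generalize ∑ k ∈ range N, (1 : ℝ) / 7 ^ (N - k) = S at hS hS0 ⊢
    interval_cases c <;> simp <;> linarith

lemma OPT_J2_le (N H : ℕ) :
    OPT (blocks (3 * H) (smallSizes N) ++ List.replicate (3 * H) (1 / 3)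
      ++ List.replicate (3 * H) (1 / 2)) ≤ 2 * H := by
  simp only [← blocks_append_singleton, List.append_assoc, List.singleton_append]
  have hS := sum_inv_seven_pow_lt N
  have hS0 : 0 ≤ ∑ k ∈ range N, (1 : ℝ) / 7 ^ (N - k) := sum_nonneg fun _ _ => by positivity
  apply OPT_blocks_le _ (fun k => if k < N + 1 then [0, 1, 1] else [0, 0, 1]) (L := N + 1)
    (length_smallSizes_append N _) (smallSizes_append_nonneg N (by norm_num))
  · intro k; split_ifs <;> rfl
  · intro k; split_ifs <;> decide
  · intro c hc; simp only [lt_irrefl, if_false]; interval_cases c <;> decide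
  · intro c hc
    rw [patternLoad_smallSizes_append N _ (a := [0, 1, 1]) (fun k hk => if_pos (by omega)),
      getD_smallSizes_append_of_le _ (by omega)]
    generalize ∑ k ∈ range N, (1 : ℝ) / 7 ^ (N - k) = S at hS hS0 ⊢
    interval_cases c <;> simp [sum_range_succ] <;> linarith

lemma OPT_one_bin_per_group_le (N M : ℕ) {x : ℝ} (hx : 0 ≤ x) :
    OPT (blocks M (smallSizes N) ++ List.replicate M (1 / 3) ++ List.replicate M (1 / 2)
      ++ List.replicate M x) ≤ M := by
  simp only [← blocks_append_singleton, List.append_assoc, List.singleton_append]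
  have hS := sum_inv_seven_pow_lt N
  have hS0 : 0 ≤ ∑ k ∈ range N, (1 : ℝ) / 7 ^ (N - k) := sum_nonneg fun _ _ => by positivity
  rw [← Nat.one_mul M]
  apply OPT_blocks_le _ (fun _ => [0]) (L := N + 2) (length_smallSizes_append N _)
    (smallSizes_append_nonneg N (by simp [hx])) (fun _ => rfl) (by simp) (by simp)
  intro c hc
  rw [patternLoad_smallSizes_append N _ (a := [0]) (fun _ _ => rfl),
    getD_smallSizes_append_of_le _ (by omega)]
  generalize ∑ k ∈ range N, (1 : ℝ) / 7 ^ (N - k) = S at hS hS0 ⊢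
  interval_cases c
  simp [sum_range_succ]
  linarith

theorem stmt16_general (N M : ℕ) (hN : 3 ≤ N)
    (hdiv : Nat.factorial (7 ^ (N + 1)) ∣ M) :
    (OPT (instI M N 1 ++ List.replicate M ((1 : ℝ) / 3)) : ℝ) ≤ 3 * M / 8 ∧
    (OPT (instI M N 1 ++ List.replicate M ((1 : ℝ) / 3)
        ++ List.replicate M ((1 : ℝ) / 2)) : ℝ) ≤ 2 * M / 3 ∧
    (OPT (instI M N 1 ++ List.replicate M ((1 : ℝ) / 3)
        ++ List.replicate (2 * M) ((1 : ℝ) / 2)) : ℝ) ≤ M ∧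
    (OPT (instI M N 1 ++ List.replicate M ((1 : ℝ) / 3)
        ++ List.replicate M ((1 : ℝ) / 2)
        ++ List.replicate M ((1 : ℝ) : ℝ)) : ℝ) ≤ M := by
  have hdvd : ∀ d, 0 < d → d ≤ 7 ^ (N + 1) → d ∣ M := fun d hd hle =>
    (Nat.dvd_factorial hd hle).trans hdiv
  have h7 : 8 ≤ 7 ^ (N + 1) := by
    calc 8 ≤ 7 ^ 2 := by norm_num
      _ ≤ 7 ^ (N + 1) := Nat.pow_le_pow_right (by norm_num) (by omega)
  obtain ⟨H₈, hH₈⟩ := hdvd 8 (by norm_num) h7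
  obtain ⟨H₃, hH₃⟩ := hdvd 3 (by norm_num) (by omega)
  rw [instI_one_eq_blocks M (by omega)]
  refine ⟨?_, ?_, ?_, ?_⟩
  · rw [hH₈]; push_cast
    calc _ ≤ ((3 * H₈ : ℕ) : ℝ) := by exact_mod_cast OPT_J3_le N H₈
      _ = _ := by push_cast; ring
  · rw [hH₃]; push_cast
    calc _ ≤ ((2 * H₃ : ℕ) : ℝ) := by exact_mod_cast OPT_J2_le N H₃
      _ = _ := by push_cast; ring
  · rw [two_mul, List.replicate_add, ← List.append_assoc]
    exact_mod_cast OPT_one_bin_per_group_le N M (by norm_num)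
  · exact_mod_cast OPT_one_bin_per_group_le N M (by norm_num)

/-- upper bounds on the optimal costs of the inputs `J_3`,
`J_2`, `J_22` and `J_1`. -/
theorem stmt16 (N M : ℕ) (hN : 3 ≤ N) (hM : 3 ≤ M)
    (hdiv : Nat.factorial (7 ^ (N + 1)) ∣ M) :
    (OPT (instI M N 1 ++ List.replicate M ((1 : ℝ) / 3)) : ℝ) ≤ 3 * M / 8 ∧
    (OPT (instI M N 1 ++ List.replicate M ((1 : ℝ) / 3)
        ++ List.replicate M ((1 : ℝ) / 2)) : ℝ) ≤ 2 * M / 3 ∧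
    (OPT (instI M N 1 ++ List.replicate M ((1 : ℝ) / 3)
        ++ List.replicate (2 * M) ((1 : ℝ) / 2)) : ℝ) ≤ M ∧
    (OPT (instI M N 1 ++ List.replicate M ((1 : ℝ) / 3)
        ++ List.replicate M ((1 : ℝ) / 2)
        ++ List.replicate M ((1 : ℝ) : ℝ)) : ℝ) ≤ M :=
  stmt16_general N M hN hdiv

end

end OOEBP
end
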